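/- arXiv:2509.13005 — 3 statements merged into one kernel-verified Lean document; each statement's English description precedes it below -/
import Mathlib

section
/- Let H be a separable complex Hilbert space, T > 0, I = (0,T), and let Σ ⊆ H be a nonempty subset that is sequentially closed for the weak topology of H. Let F : H¹(I,H) → ℝ be continuous and strongly convex, i.e. there exists α > 0 such that F(θw₁ + (1−θ)w₂) ≤ θF(w₁) + (1−θ)F(w₂) − αθ(1−θ)‖w₁−w₂‖²_{H¹(I,H)} for all w₁, w₂ ∈ H¹(I,H) and θ ∈ [0,1]. Then there exists ṽ ∈ H¹(I,Σ) such that F(ṽ) = inf { F(w) : w ∈ H¹(I,Σ) }. -/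
open MeasureTheory Filter Set
open scoped ENNReal InnerProductSpace

variable {H : Type*} [NormedAddCommGroup H] [InnerProductSpace ℂ H] [CompleteSpace H]

/-- `w` belongs to `H¹((0,T), H)` with distributional derivative `w'`, described through
its continuous representative: both `w` and `w'` are in `L²((0,T), H)` and
`w(t) = w(0) + ∫₀ᵗ w'(s) ds` for all `t ∈ [0,T]`. -/
def IsH1On (T : ℝ) (w w' : ℝ → H) : Prop :=
  MemLp w 2 (volume.restrict (Ioo 0 T)) ∧
  MemLp w' 2 (volume.restrict (Ioo 0 T)) ∧
  ∀ t ∈ Icc (0 : ℝ) T, w t = w 0 + ∫ s in (0 : ℝ)..t, w' s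

/-- The squared `H¹((0,T), H)` norm. -/
noncomputable def H1normSq (T : ℝ) (w w' : ℝ → H) : ℝ :=
  ∫ t in Ioo (0 : ℝ) T, (‖w t‖ ^ 2 + ‖w' t‖ ^ 2)

/-- Weak convergence in `H¹((0,T), H)`.  Since `H¹((0,T), H)` is a Hilbert space with the
inner product `(u,v) ↦ ∫ ⟪u(t),v(t)⟫ dt + ∫ ⟪u'(t),v'(t)⟫ dt`, by the Riesz
representation theorem convergence against every continuous linear functional on `H¹`
amounts to convergence of these inner products against every element of `H¹`. -/
def H1WeakTendsto (T : ℝ) (v v' : ℕ → ℝ → H) (w w' : ℝ → H) : Prop :=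
  ∀ u u' : ℝ → H, IsH1On T u u' →
    Tendsto
      (fun n => ∫ t in Ioo (0 : ℝ) T, (⟪u t, v n t⟫_ℂ + ⟪u' t, v' n t⟫_ℂ))
      atTop
      (nhds (∫ t in Ioo (0 : ℝ) T, (⟪u t, w t⟫_ℂ + ⟪u' t, w' t⟫_ℂ)))



/-- Any bounded sequence in a complex Hilbert space has a weakly convergent subsequence. -/
lemma exists_weak_cluster {E : Type*} [NormedAddCommGroup E] [InnerProductSpace ℂ E]
    [CompleteSpace E] (R : ℝ) (x : ℕ → E) (hx : ∀ n, ‖x n‖ ≤ R) :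
    ∃ (z : E) (φ : ℕ → ℕ), StrictMono φ ∧
      ∀ y : E, Tendsto (fun n => ⟪y, x (φ n)⟫_ℂ) atTop (nhds ⟪y, z⟫_ℂ) := by
  classical
  set K : Set (ℕ → ℂ) := Set.univ.pi fun k => Metric.closedBall 0 (‖x k‖ * R) with hK
  have hKc : IsCompact K := isCompact_univ_pi fun k => isCompact_closedBall _ _
  have hmem : ∀ n, (fun k => ⟪x k, x n⟫_ℂ) ∈ K := by
    intro n
    intro k _
    simp only [Metric.mem_closedBall, dist_zero_right]
    exact le_trans (norm_inner_le_norm _ _) (by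
      have := hx n
      have h0 := norm_nonneg (x k)
      nlinarith)
  obtain ⟨γ, hγK, φ, hφ, hconv⟩ := hKc.tendsto_subseq hmem
  have hcomp : ∀ k, Tendsto (fun n => ⟪x k, x (φ n)⟫_ℂ) atTop (nhds (γ k)) := by
    intro k
    exact (tendsto_pi_nhds.mp hconv) k
  -- the closed span of the sequence
  set W : Submodule ℂ E := (Submodule.span ℂ (Set.range x)).topologicalClosure with hW
  haveI : CompleteSpace W :=
    (Submodule.span ℂ (Set.range x)).isClosed_topologicalClosure.completeSpace_coe
  have hxW : ∀ n, x n ∈ W :=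
    fun n => (Submodule.le_topologicalClosure _) (Submodule.subset_span ⟨n, rfl⟩)
  -- limits exist on the span
  have hspan : ∀ y ∈ Submodule.span ℂ (Set.range x),
      ∃ L : ℂ, Tendsto (fun n => ⟪x (φ n), y⟫_ℂ) atTop (nhds L) := by
    intro y hy
    induction hy using Submodule.span_induction with
    | mem y hy =>
        obtain ⟨k, rfl⟩ := hy
        refine ⟨starRingEnd ℂ (γ k), ?_⟩
        have : Tendsto (fun n => starRingEnd ℂ ⟪x k, x (φ n)⟫_ℂ) atTop
            (nhds (starRingEnd ℂ (γ k))) := (Complex.continuous_conj.tendsto _).comp (hcomp k)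
        refine this.congr fun n => ?_
        simp
    | zero => exact ⟨0, by simpa using tendsto_const_nhds⟩
    | add y z _ _ hy hz =>
        obtain ⟨Ly, hLy⟩ := hy; obtain ⟨Lz, hLz⟩ := hz
        exact ⟨Ly + Lz, by simpa only [inner_add_right] using hLy.add hLz⟩
    | smul c y _ hy =>
        obtain ⟨Ly, hLy⟩ := hy
        exact ⟨c * Ly, by simpa only [inner_smul_right] using hLy.const_mul c⟩
  -- limits exist on the closure
  have hR0 : 0 ≤ R := le_trans (norm_nonneg _) (hx 0)
  have hlim : ∀ y : W, ∃ L : ℂ, Tendsto (fun n => ⟪x (φ n), (y : E)⟫_ℂ) atTop (nhds L) := by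
    intro y
    have hcau : CauchySeq (fun n => ⟪x (φ n), (y : E)⟫_ℂ) := by
      rw [Metric.cauchySeq_iff']
      intro ε hε
      have hyW : (y : E) ∈ closure (Submodule.span ℂ (Set.range x) : Set E) := y.2
      have hD : (0:ℝ) < 3 * (R + 1) + 1 := by nlinarith
      obtain ⟨y', hy'mem, hy'close⟩ := Metric.mem_closure_iff.mp hyW (ε / (3 * (R + 1) + 1))
        (div_pos hε hD)
      obtain ⟨L, hL⟩ := hspan y' hy'mem
      have hcau' : CauchySeq (fun n => ⟪x (φ n), y'⟫_ℂ) := hL.cauchySeq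
      rw [Metric.cauchySeq_iff'] at hcau'
      obtain ⟨N, hN⟩ := hcau' (ε / 3) (by positivity)
      refine ⟨N, fun n hn => ?_⟩
      have hR0 : 0 ≤ R := le_trans (norm_nonneg _) (hx 0)
      have hbnd : ∀ m, ‖⟪x (φ m), (y : E) - y'⟫_ℂ‖ ≤ ε / 3 := by
        intro m
        calc ‖⟪x (φ m), (y : E) - y'⟫_ℂ‖ ≤ ‖x (φ m)‖ * ‖(y : E) - y'‖ :=
              norm_inner_le_norm _ _
          _ ≤ R * (ε / (3 * (R + 1) + 1)) := by
              apply mul_le_mul (hx _) ?_ (norm_nonneg _) hR0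
              rw [← dist_eq_norm]
              exact le_of_lt hy'close
          _ ≤ ε / 3 := by
              rw [← mul_div_assoc, div_le_div_iff₀ hD (by norm_num : (0:ℝ) < 3)]
              nlinarith
      have h1 : dist ⟪x (φ n), (y : E)⟫_ℂ ⟪x (φ n), y'⟫_ℂ ≤ ε / 3 := by
        rw [dist_eq_norm, ← inner_sub_right]
        exact hbnd n
      have h2 : dist ⟪x (φ N), (y : E)⟫_ℂ ⟪x (φ N), y'⟫_ℂ ≤ ε / 3 := by
        rw [dist_eq_norm, ← inner_sub_right]
        exact hbnd N
      have h3 : dist ⟪x (φ n), y'⟫_ℂ ⟪x (φ N), y'⟫_ℂ < ε / 3 := hN n hn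
      calc dist ⟪x (φ n), (y : E)⟫_ℂ ⟪x (φ N), (y : E)⟫_ℂ
          ≤ dist ⟪x (φ n), (y : E)⟫_ℂ ⟪x (φ n), y'⟫_ℂ +
            dist ⟪x (φ n), y'⟫_ℂ ⟪x (φ N), y'⟫_ℂ +
            dist ⟪x (φ N), y'⟫_ℂ ⟪x (φ N), (y : E)⟫_ℂ := dist_triangle4 _ _ _ _
        _ < ε := by
            have h2' : dist ⟪x (φ N), y'⟫_ℂ ⟪x (φ N), (y : E)⟫_ℂ ≤ ε / 3 := by
              rw [dist_comm]; exact h2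
            linarith
    exact cauchySeq_tendsto_of_complete hcau
  -- the limit functional on W
  set L : W → ℂ := fun y => Classical.choose (hlim y) with hLdef
  have hLspec : ∀ y : W, Tendsto (fun n => ⟪x (φ n), (y : E)⟫_ℂ) atTop (nhds (L y)) :=
    fun y => Classical.choose_spec (hlim y)
  have hLadd : ∀ y z : W, L (y + z) = L y + L z := by
    intro y z
    refine tendsto_nhds_unique (hLspec (y + z)) ?_
    simpa only [Submodule.coe_add, inner_add_right] using (hLspec y).add (hLspec z)
  have hLsmul : ∀ (c : ℂ) (y : W), L (c • y) = c * L y := by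
    intro c y
    refine tendsto_nhds_unique (hLspec (c • y)) ?_
    simpa only [Submodule.coe_smul, inner_smul_right] using (hLspec y).const_mul c
  have hLbound : ∀ y : W, ‖L y‖ ≤ R * ‖y‖ := by
    intro y
    refine le_of_tendsto ((hLspec y).norm) ?_
    filter_upwards with n
    calc ‖⟪x (φ n), (y : E)⟫_ℂ‖ ≤ ‖x (φ n)‖ * ‖(y : E)‖ := norm_inner_le_norm _ _
      _ ≤ R * ‖y‖ := mul_le_mul_of_nonneg_right (hx _) (norm_nonneg _)
  set Lmap : W →L[ℂ] ℂ :=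
    LinearMap.mkContinuous
      { toFun := L, map_add' := hLadd, map_smul' := hLsmul } R hLbound with hLmap
  set z' : W := (InnerProductSpace.toDual ℂ W).symm Lmap with hz'
  have hz'spec : ∀ y : W, ⟪z', y⟫_ℂ = Lmap y := by
    intro y
    rw [hz', InnerProductSpace.toDual_symm_apply]
  refine ⟨(z' : E), φ, hφ, ?_⟩
  intro y
  -- decompose y using the orthogonal projection onto W
  set P := W.orthogonalProjection
  have hyd : ∀ v : E, v ∈ W → ⟪v, y - (P y : E)⟫_ℂ = 0 := by
    intro v hv
    exact (Submodule.mem_orthogonal W _).mp (W.sub_starProjection_mem_orthogonal y) v hv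
  have h1 : Tendsto (fun n => ⟪x (φ n), y⟫_ℂ) atTop (nhds ⟪(z' : E), y⟫_ℂ) := by
    have hsplit : ∀ v : E, v ∈ W → ⟪v, y⟫_ℂ = ⟪v, (P y : E)⟫_ℂ := by
      intro v hv
      have h0 := hyd v hv
      rw [inner_sub_right] at h0
      exact sub_eq_zero.mp h0
    have hz'W : (z' : E) ∈ W := z'.2
    rw [hsplit _ hz'W]
    have ht : Tendsto (fun n => ⟪x (φ n), ((P y : W) : E)⟫_ℂ) atTop (nhds (Lmap (P y))) :=
      hLspec (P y)
    have heq : ⟪(z' : E), ((P y : W) : E)⟫_ℂ = Lmap (P y) := by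
      rw [← hz'spec (P y)]; rfl
    rw [heq]
    exact ht.congr fun n => (hsplit _ (hxW (φ n))).symm
  have h2 := (Complex.continuous_conj.tendsto _).comp h1
  have h3 : Tendsto (fun n => ⟪y, x (φ n)⟫_ℂ) atTop (nhds (starRingEnd ℂ ⟪(z' : E), y⟫_ℂ)) := by
    refine h2.congr fun n => ?_
    simp only [Function.comp_apply, inner_conj_symm]
  rw [inner_conj_symm] at h3
  exact h3



/-- A continuous convex function on a normed real vector space has a subgradient at
every point. -/
lemma exists_subgradient_aux {X : Type*} [NormedAddCommGroup X] [NormedSpace ℝ X]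
    (g : X → ℝ) (hg : Continuous g) (hconv : ConvexOn ℝ Set.univ g) (x₀ : X) :
    ∃ ℓ : X →L[ℝ] ℝ, ∀ w, g x₀ + ℓ (w - x₀) ≤ g w := by
  classical
  set s : Set (X × ℝ) := {q | g q.1 < q.2} with hs
  have hsopen : IsOpen s := isOpen_lt (hg.comp continuous_fst) continuous_snd
  have hsconv : Convex ℝ s := by
    rintro ⟨a, ta⟩ ha ⟨b, tb⟩ hb θ η hθ hη hθη
    simp only [hs, Set.mem_setOf_eq] at ha hb ⊢
    have h1 : g (θ • a + η • b) ≤ θ * g a + η * g b :=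
      hconv.2 (Set.mem_univ a) (Set.mem_univ b) hθ hη hθη
    have h2 : θ * g a + η * g b < θ * ta + η * tb := by
      rcases eq_or_lt_of_le hθ with h | h
      · have hη1 : η = 1 := by linarith
        simp only [← h, hη1, zero_mul, one_mul, zero_add]
        linarith
      · rcases eq_or_lt_of_le hη with h' | h'
        · simp only [← h', zero_mul, add_zero]
          exact (mul_lt_mul_iff_right₀ h).mpr ha
        · have := (mul_lt_mul_iff_right₀ h).mpr ha
          have := (mul_lt_mul_iff_right₀ h').mpr hb
          linarith
    simpa using lt_of_le_of_lt h1 h2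
  have hx₀ : (x₀, g x₀) ∉ s := by simp [hs]
  obtain ⟨f, hf⟩ := geometric_hahn_banach_point_open hsconv hsopen hx₀
  set c := f (0, 1) with hc
  have hdecomp : ∀ p : X × ℝ, f p = f (p.1, 0) + p.2 * c := by
    intro p
    have h1 : f p = f (p.1, 0) + f (p.2 • ((0:X), (1:ℝ))) := by
      rw [← map_add]
      congr 1
      simp [Prod.ext_iff]
    rw [h1, f.map_smul, smul_eq_mul]
  have hcpos : 0 < c := by
    have h1 : f (x₀, g x₀) < f (x₀, g x₀ + 1) := hf _ (by simp [hs])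
    rw [hdecomp (x₀, g x₀), hdecomp (x₀, g x₀ + 1)] at h1
    simp only at h1
    nlinarith
  have key : ∀ w, f (x₀, 0) + g x₀ * c ≤ f (w, 0) + g w * c := by
    intro w
    have hlt : ∀ ε > (0:ℝ), f (x₀, g x₀) < f (w, g w + ε) := by
      intro ε hε
      exact hf _ (by simp [hs, hε])
    refine le_of_forall_pos_le_add ?_
    intro ε hε
    have := hlt (ε / c) (div_pos hε hcpos)
    rw [hdecomp (x₀, g x₀), hdecomp (w, g w + ε / c)] at this
    simp only at this
    have hcc : (g w + ε / c) * c = g w * c + ε := by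
      field_simp
    nlinarith
  set q : X →L[ℝ] ℝ := f.comp (ContinuousLinearMap.inl ℝ X ℝ) with hq
  refine ⟨-(c⁻¹ • q), fun w => ?_⟩
  have hqw : ∀ v : X, q v = f (v, 0) := fun v => rfl
  have := key w
  have hℓ : (-(c⁻¹ • q)) (w - x₀) = c⁻¹ * (f (x₀, 0) - f (w, 0)) := by
    simp only [ContinuousLinearMap.neg_apply, ContinuousLinearMap.smul_apply, map_sub,
      hqw, smul_eq_mul]
    ring
  rw [hℓ]
  have h2 : f (x₀, 0) - f (w, 0) ≤ (g w - g x₀) * c := by nlinarith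
  have h3 : c⁻¹ * (f (x₀, 0) - f (w, 0)) ≤ c⁻¹ * ((g w - g x₀) * c) :=
    mul_le_mul_of_nonneg_left h2 (inv_pos.mpr hcpos).le
  have h4 : c⁻¹ * ((g w - g x₀) * c) = g w - g x₀ := by field_simp
  linarith

section Toolkit

variable {H : Type*} [NormedAddCommGroup H] [InnerProductSpace ℂ H] [CompleteSpace H]
variable {T : ℝ}

lemma isFiniteMeasure_restrict_Ioo (T : ℝ) :
    IsFiniteMeasure (volume.restrict (Ioo (0:ℝ) T)) := by
  constructor
  rw [Measure.restrict_apply_univ, Real.volume_Ioo]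
  exact ENNReal.ofReal_lt_top

lemma memLp2_intervalIntegrable {f : ℝ → H}
    (h : MemLp f 2 (volume.restrict (Ioo (0:ℝ) T))) {a b : ℝ}
    (ha : 0 ≤ a) (hab : a ≤ b) (hb : b ≤ T) :
    IntervalIntegrable f volume a b := by
  haveI := isFiniteMeasure_restrict_Ioo T
  have hint : Integrable f (volume.restrict (Ioo (0:ℝ) T)) := h.integrable one_le_two
  rw [intervalIntegrable_iff, uIoc_of_le hab]
  rw [integrableOn_Ioc_iff_integrableOn_Ioo]
  have hio : IntegrableOn f (Ioo (0:ℝ) T) volume := hint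
  exact hio.mono_set (Ioo_subset_Ioo ha hb)

lemma IsH1On.intervalIntegrable {w w' : ℝ → H} (h : IsH1On T w w') {t : ℝ}
    (ht : t ∈ Icc (0:ℝ) T) : IntervalIntegrable w' volume 0 t :=
  memLp2_intervalIntegrable h.2.1 le_rfl ht.1 ht.2

lemma IsH1On.smul {w w' : ℝ → H} (h : IsH1On T w w') (c : ℝ) :
    IsH1On T (fun t => c • w t) (fun t => c • w' t) := by
  refine ⟨h.1.const_smul c, h.2.1.const_smul c, fun t ht => ?_⟩
  simp only
  rw [intervalIntegral.integral_smul, h.2.2 t ht, smul_add]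

lemma IsH1On.add {w w' v v' : ℝ → H} (h : IsH1On T w w') (h₂ : IsH1On T v v') :
    IsH1On T (fun t => w t + v t) (fun t => w' t + v' t) := by
  refine ⟨h.1.add h₂.1, h.2.1.add h₂.2.1, fun t ht => ?_⟩
  simp only
  rw [intervalIntegral.integral_add (h.intervalIntegrable ht) (h₂.intervalIntegrable ht),
    h.2.2 t ht, h₂.2.2 t ht]
  abel

lemma IsH1On.sub {w w' v v' : ℝ → H} (h : IsH1On T w w') (h₂ : IsH1On T v v') :
    IsH1On T (fun t => w t - v t) (fun t => w' t - v' t) := by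
  have := h.add (h₂.smul (-1))
  simp only [neg_smul, one_smul] at this
  refine ⟨(h.1.sub h₂.1), (h.2.1.sub h₂.2.1), fun t ht => ?_⟩
  have h3 := this.2.2 t ht
  simp only [← sub_eq_add_neg] at h3
  exact h3

lemma isH1On_const {c : H} : IsH1On T (fun _ => c) (fun _ => (0 : H)) := by
  haveI := isFiniteMeasure_restrict_Ioo T
  refine ⟨memLp_const c, memLp_const 0, fun t ht => ?_⟩
  simp

lemma integrable_norm_sq_of_memLp2 {μ : Measure ℝ} {f : ℝ → H} (h : MemLp f 2 μ) :
    Integrable (fun t => ‖f t‖ ^ 2) μ := by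
  have := h.integrable_norm_rpow (by norm_num) (by norm_num)
  refine this.congr ?_
  filter_upwards with t
  rw [ENNReal.toReal_ofNat, Real.rpow_two]

/-- The `L²` norm squared as an integral. -/
lemma Lp_norm_sq_eq {μ : Measure ℝ} (f : Lp H 2 μ) : ‖f‖ ^ 2 = ∫ t, ‖f t‖ ^ 2 ∂μ := by
  rw [← inner_self_eq_norm_sq (𝕜 := ℂ) f, L2.inner_def]
  rw [← integral_re (L2.integrable_inner f f)]
  congr 1
  ext t
  rw [inner_self_eq_norm_sq]

/-- `H1normSq` of representative differences equals the sum of squared `L²` norms. -/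
lemma H1normSq_eq_sum {w w' : ℝ → H}
    (hw : MemLp w 2 (volume.restrict (Ioo (0:ℝ) T)))
    (hw' : MemLp w' 2 (volume.restrict (Ioo (0:ℝ) T))) :
    H1normSq T w w' = (∫ t, ‖w t‖ ^ 2 ∂(volume.restrict (Ioo (0:ℝ) T)))
      + ∫ t, ‖w' t‖ ^ 2 ∂(volume.restrict (Ioo (0:ℝ) T)) := by
  rw [H1normSq]
  exact integral_add (integrable_norm_sq_of_memLp2 hw) (integrable_norm_sq_of_memLp2 hw')

/-- Pointwise bound on `[0,T]` by integral quantities. -/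
lemma IsH1On.pointwise_bound {w w' : ℝ → H} (hT : 0 < T) (h : IsH1On T w w') {t : ℝ}
    (ht : t ∈ Icc (0:ℝ) T) :
    T * ‖w t‖ ≤ (∫ s in Ioo (0:ℝ) T, ‖w s‖) + T * ∫ s in Ioo (0:ℝ) T, ‖w' s‖ := by
  haveI := isFiniteMeasure_restrict_Ioo T
  have hw'int : Integrable w' (volume.restrict (Ioo (0:ℝ) T)) := h.2.1.integrable one_le_two
  have hwint : Integrable w (volume.restrict (Ioo (0:ℝ) T)) := h.1.integrable one_le_two
  have key : ∀ s ∈ Ioo (0:ℝ) T, ‖w t‖ ≤ ‖w s‖ + ∫ r in Ioo (0:ℝ) T, ‖w' r‖ := by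
    intro s hs
    have hsI : s ∈ Icc (0:ℝ) T := ⟨hs.1.le, hs.2.le⟩
    have hws := h.2.2 s hsI
    have hwt := h.2.2 t ht
    have hdiff : w t - w s = ∫ r in s..t, w' r := by
      rw [hwt, hws]
      rw [add_sub_add_left_eq_sub]
      rw [intervalIntegral.integral_interval_sub_left (h.intervalIntegrable ht)
        (h.intervalIntegrable hsI)]
    have hbound : ‖∫ r in s..t, w' r‖ ≤ ∫ r in Ioo (0:ℝ) T, ‖w' r‖ := by
      have hnn : 0 ≤ᵐ[volume.restrict (Ioo (0:ℝ) T)] fun r => ‖w' r‖ :=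
        Filter.Eventually.of_forall fun r => norm_nonneg _
      rcases le_total s t with hst | hst
      · rw [intervalIntegral.integral_of_le hst]
        calc ‖∫ r in Ioc s t, w' r‖ ≤ ∫ r in Ioc s t, ‖w' r‖ := norm_integral_le_integral_norm _
          _ = ∫ r in Ioo s t, ‖w' r‖ := integral_Ioc_eq_integral_Ioo
          _ ≤ ∫ r in Ioo (0:ℝ) T, ‖w' r‖ := by
              refine setIntegral_mono_set hw'int.norm hnn ?_
              exact HasSubset.Subset.eventuallyLE (Ioo_subset_Ioo hs.1.le ht.2)
      · rw [intervalIntegral.integral_of_ge hst, norm_neg]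
        calc ‖∫ r in Ioc t s, w' r‖ ≤ ∫ r in Ioc t s, ‖w' r‖ := norm_integral_le_integral_norm _
          _ = ∫ r in Ioo t s, ‖w' r‖ := integral_Ioc_eq_integral_Ioo
          _ ≤ ∫ r in Ioo (0:ℝ) T, ‖w' r‖ := by
              refine setIntegral_mono_set hw'int.norm hnn ?_
              exact HasSubset.Subset.eventuallyLE (Ioo_subset_Ioo ht.1 hs.2.le)
    calc ‖w t‖ = ‖w s + (w t - w s)‖ := by congr 1; abel
      _ ≤ ‖w s‖ + ‖w t - w s‖ := norm_add_le _ _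
      _ ≤ ‖w s‖ + ∫ r in Ioo (0:ℝ) T, ‖w' r‖ := by rw [hdiff]; linarith [hbound]
  -- integrate over s
  have hmono : ∫ s in Ioo (0:ℝ) T, ‖w t‖ ≤
      ∫ s in Ioo (0:ℝ) T, (‖w s‖ + ∫ r in Ioo (0:ℝ) T, ‖w' r‖) := by
    refine setIntegral_mono_on (integrable_const _) (hwint.norm.add (integrable_const _))
      measurableSet_Ioo key
  rw [setIntegral_const] at hmono
  rw [integral_add hwint.norm (integrable_const _), setIntegral_const] at hmono
  rw [Real.volume_real_Ioo_of_le hT.le, sub_zero] at hmono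
  simpa [smul_eq_mul, mul_comm] using hmono

/-- Cheap `L¹`–`L²` bound. -/
lemma integral_norm_le_of_memLp2 (hT : 0 < T) {f : ℝ → H}
    (h : MemLp f 2 (volume.restrict (Ioo (0:ℝ) T))) :
    ∫ t in Ioo (0:ℝ) T, ‖f t‖ ≤ T / 2 + (1 / 2) * ∫ t in Ioo (0:ℝ) T, ‖f t‖ ^ 2 := by
  haveI := isFiniteMeasure_restrict_Ioo T
  have hint : Integrable f (volume.restrict (Ioo (0:ℝ) T)) := h.integrable one_le_two
  have h2 : Integrable (fun t => ‖f t‖ ^ 2) (volume.restrict (Ioo (0:ℝ) T)) :=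
    integrable_norm_sq_of_memLp2 h
  have hmono : ∫ t in Ioo (0:ℝ) T, ‖f t‖ ≤
      ∫ t in Ioo (0:ℝ) T, (1 / 2 + (1 / 2) * ‖f t‖ ^ 2) := by
    refine integral_mono hint.norm ((integrable_const _).add (h2.const_mul _)) ?_
    intro t
    simp only
    nlinarith [norm_nonneg (f t), sq_nonneg (1 - ‖f t‖)]
  rw [integral_add (integrable_const _) (h2.const_mul _), setIntegral_const,
    integral_const_mul, Real.volume_real_Ioo_of_le hT.le, sub_zero] at hmono
  simpa [smul_eq_mul, mul_comm, div_eq_mul_inv] using hmono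

end Toolkit

section Sub
variable {H : Type*} [NormedAddCommGroup H] [InnerProductSpace ℂ H] [CompleteSpace H]

/-- The subspace of `L² × L²` consisting of `H¹` pairs. -/
noncomputable def H1pairs (T : ℝ) :
    Submodule ℝ (Lp H 2 (volume.restrict (Ioo (0:ℝ) T)) ×
      Lp H 2 (volume.restrict (Ioo (0:ℝ) T))) where
  carrier := {p | ∃ w w', IsH1On T w w' ∧
    (p.1 : ℝ → H) =ᵐ[volume.restrict (Ioo (0:ℝ) T)] w ∧
    (p.2 : ℝ → H) =ᵐ[volume.restrict (Ioo (0:ℝ) T)] w'}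
  add_mem' := by
    rintro p q ⟨w, w', hw, hp1, hp2⟩ ⟨v, v', hv, hq1, hq2⟩
    refine ⟨fun t => w t + v t, fun t => w' t + v' t, hw.add hv, ?_, ?_⟩
    · filter_upwards [Lp.coeFn_add p.1 q.1, hp1, hq1] with t h1 h2 h3
      exact h1.trans (by simp [h2, h3])
    · filter_upwards [Lp.coeFn_add p.2 q.2, hp2, hq2] with t h1 h2 h3
      exact h1.trans (by simp [h2, h3])
  zero_mem' := by
    refine ⟨fun _ => (0:H), fun _ => (0:H), isH1On_const, ?_, ?_⟩ <;>
      · filter_upwards [Lp.coeFn_zero H 2 (volume.restrict (Ioo (0:ℝ) T))] with t h1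
        simp only [Prod.fst_zero, Prod.snd_zero]
        exact h1
  smul_mem' := by
    rintro c p ⟨w, w', hw, hp1, hp2⟩
    refine ⟨fun t => c • w t, fun t => c • w' t, hw.smul c, ?_, ?_⟩
    · filter_upwards [Lp.coeFn_smul c p.1, hp1] with t h1 h2
      exact h1.trans (by simp [h2])
    · filter_upwards [Lp.coeFn_smul c p.2, hp2] with t h1 h2
      exact h1.trans (by simp [h2])

end Sub

section InnerHelpers
variable {E : Type*} [NormedAddCommGroup E] [InnerProductSpace ℂ E]

lemma norm_combo_sq (x y : E) {θ η : ℝ} (hθ : 0 ≤ θ) (hη : 0 ≤ η) (h : θ + η = 1) :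
    ‖θ • x + η • y‖^2 = θ*‖x‖^2 + η*‖y‖^2 - θ*η*‖x - y‖^2 := by
  have h1 : ‖θ • x + η • y‖^2 = ‖θ • x‖^2 + 2 * Complex.re ⟪θ•x, η•y⟫_ℂ + ‖η • y‖^2 :=
    norm_add_sq (𝕜 := ℂ) _ _
  have h2 : ‖x - y‖^2 = ‖x‖^2 - 2 * Complex.re ⟪x, y⟫_ℂ + ‖y‖^2 :=
    norm_sub_sq (𝕜 := ℂ) x y
  have h3 : ⟪θ•x, η•y⟫_ℂ = (θ * η) • ⟪x, y⟫_ℂ := by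
    rw [RCLike.real_smul_eq_coe_smul (K := ℂ) θ x, RCLike.real_smul_eq_coe_smul (K := ℂ) η y,
      inner_smul_real_left, inner_smul_real_right, smul_smul]
  have h4 : Complex.re ((θ * η) • ⟪x, y⟫_ℂ) = θ * η * Complex.re ⟪x, y⟫_ℂ := by
    rw [Complex.real_smul]
    simp
  have h5 : ‖θ • x‖ = θ * ‖x‖ := by
    rw [norm_smul, Real.norm_eq_abs, abs_of_nonneg hθ]
  have h6 : ‖η • y‖ = η * ‖y‖ := by
    rw [norm_smul, Real.norm_eq_abs, abs_of_nonneg hη]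
  rw [h1, h3, h4, h5, h6]
  have hη' : η = 1 - θ := by linarith
  subst hη'
  rw [h2]
  ring

lemma two_inner_re_le_norm_sq (z x : E) :
    2 * Complex.re ⟪z, x⟫_ℂ - ‖z‖^2 ≤ ‖x‖^2 := by
  have h2 : ‖z - x‖^2 = ‖z‖^2 - 2 * Complex.re ⟪z, x⟫_ℂ + ‖x‖^2 :=
    norm_sub_sq (𝕜 := ℂ) z x
  nlinarith [sq_nonneg ‖z - x‖]

end InnerHelpers


set_option maxHeartbeats 1000000

/-- Let `H` be a separable complex Hilbert space, `T > 0`, and `Σ ⊆ H`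
a nonempty weakly sequentially closed subset.  Let `F` be a continuous strongly convex
functional on `H¹((0,T), H)` (an element of `H¹` being described by the pair of a
function and its derivative).  Then `F` attains its infimum on `H¹((0,T), Σ)`. -/
theorem exists_minimizer_on_H1_of_weakly_closed
    {H : Type*} [NormedAddCommGroup H] [InnerProductSpace ℂ H] [CompleteSpace H]
    [TopologicalSpace.SeparableSpace H]
    (T : ℝ) (hT : 0 < T)
    (S : Set H) (hS : S.Nonempty)
    -- `S` is weakly sequentially closed in `H`
    (hSweak : ∀ (x : ℕ → H) (x' : H), (∀ k, x k ∈ S) →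
      (∀ y : H, Tendsto (fun k => ⟪y, x k⟫_ℂ) atTop (nhds ⟪y, x'⟫_ℂ)) → x' ∈ S)
    (F : (ℝ → H) → (ℝ → H) → ℝ)
    -- `F` is (sequentially) continuous for the `H¹((0,T), H)` norm
    (hFcont : ∀ (u u' : ℝ → H), IsH1On T u u' →
      ∀ (un un' : ℕ → ℝ → H), (∀ n, IsH1On T (un n) (un' n)) →
      Tendsto (fun n => H1normSq T (fun t => un n t - u t) (fun t => un' n t - u' t))
        atTop (nhds 0) →
      Tendsto (fun n => F (un n) (un' n)) atTop (nhds (F u u')))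
    -- `F` is strongly convex with parameter `α > 0`
    (α : ℝ) (hα : 0 < α)
    (hFconv : ∀ (w₁ w₁' w₂ w₂' : ℝ → H), IsH1On T w₁ w₁' → IsH1On T w₂ w₂' →
      ∀ θ : ℝ, θ ∈ Icc (0 : ℝ) 1 →
        F (fun t => θ • w₁ t + (1 - θ) • w₂ t) (fun t => θ • w₁' t + (1 - θ) • w₂' t) ≤
          θ * F w₁ w₁' + (1 - θ) * F w₂ w₂' -
            α * θ * (1 - θ) * H1normSq T (fun t => w₁ t - w₂ t) (fun t => w₁' t - w₂' t)) :
    ∃ vt vt' : ℝ → H, IsH1On T vt vt' ∧ (∀ t ∈ Icc (0 : ℝ) T, vt t ∈ S) ∧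
      ∀ w w' : ℝ → H, IsH1On T w w' → (∀ t ∈ Icc (0 : ℝ) T, w t ∈ S) →
        F vt vt' ≤ F w w' := by
  classical
  haveI : IsFiniteMeasure (volume.restrict (Ioo (0:ℝ) T)) := isFiniteMeasure_restrict_Ioo T
  set μ : Measure ℝ := volume.restrict (Ioo (0:ℝ) T) with hμdef
  set V : Submodule ℝ (Lp H 2 μ × Lp H 2 μ) := H1pairs T with hVdef
  obtain ⟨c₀S, hc₀S⟩ := hS
  -- choose representatives
  have hrepex : ∀ p : V, ∃ w w', IsH1On T w w' ∧
      (⇑(↑p : Lp H 2 μ × Lp H 2 μ).1 =ᵐ[μ] w) ∧ (⇑(↑p : Lp H 2 μ × Lp H 2 μ).2 =ᵐ[μ] w') :=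
    fun p => p.2
  choose rep rep' hrepH1 hrep1 hrep2 using hrepex
  set c1 : V → Lp H 2 μ := fun p => (↑p : Lp H 2 μ × Lp H 2 μ).1 with hc1def
  set c2 : V → Lp H 2 μ := fun p => (↑p : Lp H 2 μ × Lp H 2 μ).2 with hc2def
  set Fb : V → ℝ := fun p => F (rep p) (rep' p) with hFbdef
  -- F only depends on the a.e. class
  have hFcongr : ∀ (w w' v v' : ℝ → H), IsH1On T w w' → IsH1On T v v' →
      w =ᵐ[μ] v → w' =ᵐ[μ] v' → F w w' = F v v' := by
    intro w w' v v' hw hv h1 h2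
    have hzero : H1normSq T (fun t => w t - v t) (fun t => w' t - v' t) = 0 := by
      rw [H1normSq]
      have he : (fun t => ‖w t - v t‖^2 + ‖w' t - v' t‖^2) =ᵐ[μ] (fun _ => (0:ℝ)) := by
        filter_upwards [h1, h2] with t e1 e2
        simp [e1, e2]
      rw [integral_congr_ae he]
      simp
    have hseq := hFcont v v' hv (fun _ => w) (fun _ => w') (fun _ => hw)
      (by simpa [hzero] using (tendsto_const_nhds :
        Tendsto (fun _ : ℕ => (0:ℝ)) atTop (nhds 0)))
    exact tendsto_nhds_unique tendsto_const_nhds hseq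
  have hFbSpec : ∀ (p : V) (w w' : ℝ → H), IsH1On T w w' →
      ⇑(c1 p) =ᵐ[μ] w → ⇑(c2 p) =ᵐ[μ] w' → Fb p = F w w' :=
    fun p w w' h h1 h2 =>
      hFcongr _ _ _ _ (hrepH1 p) h ((hrep1 p).symm.trans h1) ((hrep2 p).symm.trans h2)
  -- norm bridges
  have hLpnorm : ∀ (f : Lp H 2 μ) (g : ℝ → H), ⇑f =ᵐ[μ] g →
      ∫ t, ‖g t‖^2 ∂μ = ‖f‖^2 := by
    intro f g hfg
    rw [Lp_norm_sq_eq f]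
    refine integral_congr_ae ?_
    filter_upwards [hfg] with t ht
    rw [ht]
  have hnormSq : ∀ p q : V,
      H1normSq T (fun t => rep p t - rep q t) (fun t => rep' p t - rep' q t)
        = ‖c1 p - c1 q‖^2 + ‖c2 p - c2 q‖^2 := by
    intro p q
    rw [H1normSq_eq_sum (w := fun t => rep p t - rep q t) (w' := fun t => rep' p t - rep' q t)
      ((hrepH1 p).1.sub (hrepH1 q).1) ((hrepH1 p).2.1.sub (hrepH1 q).2.1)]
    have e1 : ⇑(c1 p - c1 q) =ᵐ[μ] fun t => rep p t - rep q t := by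
      filter_upwards [Lp.coeFn_sub (c1 p) (c1 q), hrep1 p, hrep1 q] with t a1 a2 a3
      exact a1.trans (by rw [Pi.sub_apply]; exact congrArg₂ _ a2 a3)
    have e2 : ⇑(c2 p - c2 q) =ᵐ[μ] fun t => rep' p t - rep' q t := by
      filter_upwards [Lp.coeFn_sub (c2 p) (c2 q), hrep2 p, hrep2 q] with t a1 a2 a3
      exact a1.trans (by rw [Pi.sub_apply]; exact congrArg₂ _ a2 a3)
    rw [hLpnorm _ _ e1, hLpnorm _ _ e2]
  -- continuity of Fb
  have hFbCont : Continuous Fb := by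
    refine continuous_iff_seqContinuous.mpr ?_
    intro pn p hconv
    refine hFcont (rep p) (rep' p) (hrepH1 p) (fun n => rep (pn n)) (fun n => rep' (pn n))
      (fun n => hrepH1 (pn n)) ?_
    have heq : ∀ n, H1normSq T (fun t => rep (pn n) t - rep p t)
        (fun t => rep' (pn n) t - rep' p t)
        = ‖c1 (pn n) - c1 p‖^2 + ‖c2 (pn n) - c2 p‖^2 := fun n => hnormSq (pn n) p
    simp only [heq]
    have h1 : Tendsto (fun n => c1 (pn n)) atTop (nhds (c1 p)) :=
      ((continuous_fst.comp continuous_subtype_val).tendsto p).comp hconv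
    have h2 : Tendsto (fun n => c2 (pn n)) atTop (nhds (c2 p)) :=
      ((continuous_snd.comp continuous_subtype_val).tendsto p).comp hconv
    have h3 : Tendsto (fun n => ‖c1 (pn n) - c1 p‖) atTop (nhds 0) :=
      tendsto_iff_norm_sub_tendsto_zero.mp h1
    have h4 : Tendsto (fun n => ‖c2 (pn n) - c2 p‖) atTop (nhds 0) :=
      tendsto_iff_norm_sub_tendsto_zero.mp h2
    have := ((h3.pow 2).add (h4.pow 2))
    simpa using this
  -- the quadratic functional
  set Nf : V → ℝ := fun p => ‖c1 p‖^2 + ‖c2 p‖^2 with hNfdef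
  have hNfCont : Continuous Nf :=
    (((continuous_fst.comp continuous_subtype_val).norm.pow 2).add
      ((continuous_snd.comp continuous_subtype_val).norm.pow 2))
  set G : V → ℝ := fun p => Fb p - α * Nf p with hGdef
  have hGcont : Continuous G := hFbCont.sub (continuous_const.mul hNfCont)
  -- convexity of G
  have hGconv : ConvexOn ℝ univ G := by
    refine ⟨convex_univ, ?_⟩
    intro a _ b _ θ η hθ hη hθη
    have hη' : η = 1 - θ := by linarith
    subst hη'
    have hθ1 : θ ≤ 1 := by linarith
    have hcomb : IsH1On T (fun t => θ • rep a t + (1-θ) • rep b t)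
        (fun t => θ • rep' a t + (1-θ) • rep' b t) :=
      ((hrepH1 a).smul θ).add ((hrepH1 b).smul (1-θ))
    have hae1 : ⇑(c1 (θ•a + (1-θ)•b)) =ᵐ[μ] fun t => θ • rep a t + (1-θ) • rep b t := by
      have h0 : c1 (θ•a + (1-θ)•b) = θ • c1 a + (1-θ) • c1 b := rfl
      rw [h0]
      filter_upwards [Lp.coeFn_add (θ • c1 a) ((1-θ) • c1 b), Lp.coeFn_smul θ (c1 a),
        Lp.coeFn_smul (1-θ) (c1 b), hrep1 a, hrep1 b] with t e1 e2 e3 e4 e5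
      rw [Pi.add_apply] at e1
      rw [e1, e2, e3]
      exact congrArg₂ (fun x y => θ • x + (1-θ) • y) e4 e5
    have hae2 : ⇑(c2 (θ•a + (1-θ)•b)) =ᵐ[μ] fun t => θ • rep' a t + (1-θ) • rep' b t := by
      have h0 : c2 (θ•a + (1-θ)•b) = θ • c2 a + (1-θ) • c2 b := rfl
      rw [h0]
      filter_upwards [Lp.coeFn_add (θ • c2 a) ((1-θ) • c2 b), Lp.coeFn_smul θ (c2 a),
        Lp.coeFn_smul (1-θ) (c2 b), hrep2 a, hrep2 b] with t e1 e2 e3 e4 e5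
      rw [Pi.add_apply] at e1
      rw [e1, e2, e3]
      exact congrArg₂ (fun x y => θ • x + (1-θ) • y) e4 e5
    have hFbcomb : Fb (θ•a + (1-θ)•b) = F (fun t => θ • rep a t + (1-θ) • rep b t)
        (fun t => θ • rep' a t + (1-θ) • rep' b t) := hFbSpec _ _ _ hcomb hae1 hae2
    have hconv2 := hFconv (rep a) (rep' a) (rep b) (rep' b) (hrepH1 a) (hrepH1 b) θ ⟨hθ, hθ1⟩
    rw [hnormSq a b] at hconv2
    have hNeq : Nf (θ•a + (1-θ)•b) = θ * Nf a + (1-θ) * Nf b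
        - θ*(1-θ)*(‖c1 a - c1 b‖^2 + ‖c2 a - c2 b‖^2) := by
      have e1 : c1 (θ•a + (1-θ)•b) = θ • c1 a + (1-θ) • c1 b := rfl
      have e2 : c2 (θ•a + (1-θ)•b) = θ • c2 a + (1-θ) • c2 b := rfl
      show ‖c1 (θ•a + (1-θ)•b)‖^2 + ‖c2 (θ•a + (1-θ)•b)‖^2 = _
      rw [e1, e2, show ‖θ • c1 a + (1-θ) • c1 b‖^2 = _ from norm_combo_sq (c1 a) (c1 b) hθ hη (by linarith),
        show ‖θ • c2 a + (1-θ) • c2 b‖^2 = _ from norm_combo_sq (c2 a) (c2 b) hθ hη (by linarith)]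
      show (θ * (‖c1 a‖^2) + (1-θ) * ‖c1 b‖^2 - θ*(1-θ)*‖c1 a - c1 b‖^2)
          + (θ * (‖c2 a‖^2) + (1-θ) * ‖c2 b‖^2 - θ*(1-θ)*‖c2 a - c2 b‖^2) = _
      show _ = θ * (‖c1 a‖^2 + ‖c2 a‖^2) + (1-θ) * (‖c1 b‖^2 + ‖c2 b‖^2)
          - θ*(1-θ)*(‖c1 a - c1 b‖^2 + ‖c2 a - c2 b‖^2)
      ring
    have hGa : G a = Fb a - α * Nf a := rfl
    have hGb : G b = Fb b - α * Nf b := rfl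
    have hGc : G (θ•a + (1-θ)•b) = Fb (θ•a + (1-θ)•b) - α * Nf (θ•a + (1-θ)•b) := rfl
    have hFa : Fb a = F (rep a) (rep' a) := rfl
    have hFbb : Fb b = F (rep b) (rep' b) := rfl
    simp only [smul_eq_mul]
    rw [hGc, hGa, hGb, hFbcomb, hNeq, hFa, hFbb]
    nlinarith [hconv2]
  -- lower bound via a subgradient at 0
  have hNlow : ∀ p : V, ‖p‖^2 ≤ Nf p := by
    intro p
    have hN : Nf p = ‖c1 p‖^2 + ‖c2 p‖^2 := rfl
    have h2 : ‖p‖ = max ‖c1 p‖ ‖c2 p‖ := Prod.norm_def _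
    rw [hN, h2]
    rcases max_cases ‖c1 p‖ ‖c2 p‖ with ⟨hm, _⟩ | ⟨hm, _⟩ <;> rw [hm] <;>
      nlinarith [norm_nonneg (c1 p), norm_nonneg (c2 p)]
  obtain ⟨ℓ₀, hℓ₀⟩ := exists_subgradient_aux G hGcont hGconv 0
  have hquad : ∀ p : V, G 0 - ‖ℓ₀‖ * ‖p‖ + α * ‖p‖^2 ≤ Fb p := by
    intro p
    have h1 := hℓ₀ p
    rw [sub_zero] at h1
    have habs : |ℓ₀ p| ≤ ‖ℓ₀‖ * ‖p‖ := by
      rw [← Real.norm_eq_abs]; exact ℓ₀.le_opNorm p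
    have h3 : G p = Fb p - α * Nf p := rfl
    have h4 := hNlow p
    have h5 : α * ‖p‖^2 ≤ α * Nf p := mul_le_mul_of_nonneg_left h4 hα.le
    have h6 := neg_abs_le (ℓ₀ p)
    linarith
  have hlow : ∀ p : V, G 0 - ‖ℓ₀‖^2/(4*α) ≤ Fb p := by
    intro p
    have h1 := hquad p
    have h2 : 0 ≤ (2*α*‖p‖ - ‖ℓ₀‖)^2 := sq_nonneg _
    have h3 : (0:ℝ) < 4*α := by linarith
    suffices h : 0 ≤ α*‖p‖^2 - ‖ℓ₀‖*‖p‖ + ‖ℓ₀‖^2/(4*α) by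
      calc G 0 - ‖ℓ₀‖^2/(4*α) ≤ G 0 - ‖ℓ₀‖ * ‖p‖ + α * ‖p‖^2 := by linarith
        _ ≤ Fb p := h1
    have h6 : 0 ≤ (2*α*‖p‖ - ‖ℓ₀‖)^2 / (4*α) := div_nonneg h2 h3.le
    have h7 : (2*α*‖p‖ - ‖ℓ₀‖)^2 / (4*α) = α*‖p‖^2 - ‖ℓ₀‖*‖p‖ + ‖ℓ₀‖^2/(4*α) := by
      field_simp
      ring
    linarith
  -- the admissible set of values
  set A : Set ℝ := {r | ∃ w w', IsH1On T w w' ∧ (∀ t ∈ Icc (0:ℝ) T, w t ∈ S) ∧ F w w' = r}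
    with hAdef
  have hmkmem : ∀ (w w' : ℝ → H) (h : IsH1On T w w'),
      ((h.1.toLp w, h.2.1.toLp w') : Lp H 2 μ × Lp H 2 μ) ∈ V :=
    fun w w' h => ⟨w, w', h, h.1.coeFn_toLp, h.2.1.coeFn_toLp⟩
  have hFbmk : ∀ (w w' : ℝ → H) (h : IsH1On T w w'),
      Fb ⟨_, hmkmem w w' h⟩ = F w w' :=
    fun w w' h => hFbSpec ⟨_, hmkmem w w' h⟩ w w' h h.1.coeFn_toLp h.2.1.coeFn_toLp
  have hAbdd : BddBelow A := by
    refine ⟨G 0 - ‖ℓ₀‖^2/(4*α), ?_⟩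
    rintro r ⟨w, w', hw, hwS, rfl⟩
    have h1 := hlow ⟨_, hmkmem w w' hw⟩
    rwa [hFbmk w w' hw] at h1
  have hAne : A.Nonempty :=
    ⟨F (fun _ => c₀S) (fun _ => 0), fun _ => c₀S, fun _ => 0, isH1On_const,
      fun t _ => hc₀S, rfl⟩
  set m := sInf A with hmdef
  -- minimizing sequence
  have hseq : ∀ n : ℕ, ∃ r ∈ A, r < m + 1/((n:ℝ)+1) :=
    fun n => Real.lt_sInf_add_pos hAne (by positivity)
  choose rs hrsA hrslt using hseq
  have hrsA' := hrsA
  simp only [hAdef, mem_setOf_eq] at hrsA'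
  choose u u' hu huS hFu using hrsA'
  have hub : ∀ n, F (u n) (u' n) < m + 1/((n:ℝ)+1) := fun n => (hFu n) ▸ hrslt n
  have hm_le : ∀ n, m ≤ F (u n) (u' n) :=
    fun n => csInf_le hAbdd ⟨u n, u' n, hu n, huS n, rfl⟩
  have hFtend : Tendsto (fun n => F (u n) (u' n)) atTop (nhds m) := by
    refine tendsto_of_tendsto_of_tendsto_of_le_of_le tendsto_const_nhds ?_ hm_le
      (fun n => (hub n).le)
    have h0 : Tendsto (fun n : ℕ => 1/((n:ℝ)+1)) atTop (nhds 0) :=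
      tendsto_one_div_add_atTop_nhds_zero_nat
    simpa using tendsto_const_nhds.add h0
  set pn : ℕ → V := fun n => ⟨_, hmkmem (u n) (u' n) (hu n)⟩ with hpndef
  have hFbpn : ∀ n, Fb (pn n) = F (u n) (u' n) := fun n => hFbmk (u n) (u' n) (hu n)
  have hFbtend : Tendsto (fun n => Fb (pn n)) atTop (nhds m) := by
    simpa only [hFbpn] using hFtend
  -- boundedness of the minimizing sequence
  have hFble : ∀ n, Fb (pn n) ≤ m + 1 := by
    intro n
    rw [hFbpn n]
    have h2 : 1/((n:ℝ)+1) ≤ 1 := by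
      rw [div_le_one (by positivity)]
      linarith [Nat.cast_nonneg (α := ℝ) n]
    linarith [hub n]
  set M : ℝ := max 1 ((max 0 (m + 1 - G 0) + ‖ℓ₀‖)/α) with hMdef
  have hMn : ∀ n, ‖pn n‖ ≤ M := by
    intro n
    by_contra hcon
    push_neg at hcon
    have h1 : (1:ℝ) < ‖pn n‖ := lt_of_le_of_lt (le_max_left _ _) hcon
    have h2 : (max 0 (m + 1 - G 0) + ‖ℓ₀‖)/α < ‖pn n‖ :=
      lt_of_le_of_lt (le_max_right _ _) hcon
    have h3 := hquad (pn n)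
    have h4 := hFble n
    rw [div_lt_iff₀ hα] at h2
    have h5 := mul_lt_mul_of_pos_right h2 (lt_trans zero_lt_one h1)
    have h6 := le_max_left 0 (m + 1 - G 0)
    have h7 := le_max_right 0 (m + 1 - G 0)
    nlinarith [norm_nonneg (pn n), norm_nonneg ℓ₀]
  have hM0 : (0:ℝ) ≤ M := le_trans zero_le_one (le_max_left _ _)
  have hMc1 : ∀ n, ‖c1 (pn n)‖ ≤ M := fun n => le_trans (norm_fst_le _) (hMn n)
  have hMc2 : ∀ n, ‖c2 (pn n)‖ ≤ M := fun n => le_trans (norm_snd_le _) (hMn n)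
  -- uniform pointwise bound
  have hIntSq1 : ∀ n, ∫ t, ‖u n t‖^2 ∂μ ≤ M^2 := by
    intro n
    have he := hLpnorm (c1 (pn n)) (u n) (hu n).1.coeFn_toLp
    rw [he]
    nlinarith [hMc1 n, norm_nonneg (c1 (pn n))]
  have hIntSq2 : ∀ n, ∫ t, ‖u' n t‖^2 ∂μ ≤ M^2 := by
    intro n
    have he := hLpnorm (c2 (pn n)) (u' n) (hu n).2.1.coeFn_toLp
    rw [he]
    nlinarith [hMc2 n, norm_nonneg (c2 (pn n))]
  set B : ℝ := (T/2 + M^2/2 + T*(T/2 + M^2/2))/T with hBdef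
  have hptB : ∀ n, ∀ t ∈ Icc (0:ℝ) T, ‖u n t‖ ≤ B := by
    intro n t ht
    have h1 := (hu n).pointwise_bound hT ht
    have h2 := integral_norm_le_of_memLp2 hT (hu n).1
    have h3 := integral_norm_le_of_memLp2 hT (hu n).2.1
    have h4 := hIntSq1 n
    have h5 := hIntSq2 n
    rw [hBdef, le_div_iff₀ hT]
    have h6 : T * (∫ s in Ioo (0:ℝ) T, ‖u' n s‖) ≤ T * (T/2 + (1/2) * ∫ t, ‖u' n t‖^2 ∂μ) :=
      mul_le_mul_of_nonneg_left h3 hT.le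
    nlinarith
  -- weak cluster points
  obtain ⟨z₁, φ₁, hφ₁, hwz₁⟩ := exists_weak_cluster M (fun n => c1 (pn n)) hMc1
  obtain ⟨z₂, φ₂, hφ₂, hwz₂⟩ :=
    exists_weak_cluster M (fun n => c2 (pn (φ₁ n))) (fun n => hMc2 _)
  obtain ⟨c₀, φ₃, hφ₃, hwc₀⟩ :=
    exists_weak_cluster B (fun n => u (φ₁ (φ₂ n)) 0) (fun n => hptB _ 0 ⟨le_rfl, hT.le⟩)
  set ψ : ℕ → ℕ := fun n => φ₁ (φ₂ (φ₃ n)) with hψdef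
  have hψmono : StrictMono ψ := hφ₁.comp (hφ₂.comp hφ₃)
  have hwz₁' : ∀ g : Lp H 2 μ,
      Tendsto (fun n => ⟪g, c1 (pn (ψ n))⟫_ℂ) atTop (nhds ⟪g, z₁⟫_ℂ) :=
    fun g => (hwz₁ g).comp ((hφ₂.comp hφ₃).tendsto_atTop)
  have hwz₂' : ∀ g : Lp H 2 μ,
      Tendsto (fun n => ⟪g, c2 (pn (ψ n))⟫_ℂ) atTop (nhds ⟪g, z₂⟫_ℂ) :=
    fun g => (hwz₂ g).comp (hφ₃.tendsto_atTop)
  have hwc₀' : ∀ y : H,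
      Tendsto (fun n => ⟪y, u (ψ n) 0⟫_ℂ) atTop (nhds ⟪y, c₀⟫_ℂ) := hwc₀
  -- the candidate minimizer
  set vt : ℝ → H := fun t => c₀ + ∫ s in (0:ℝ)..t, (z₂ : ℝ → H) s with hvtdef
  have hz₂mem : MemLp (⇑z₂) 2 μ := Lp.memLp z₂
  have hcontOn : ContinuousOn vt (Icc (0:ℝ) T) := by
    refine continuousOn_const.add ?_
    have hIcc : IntegrableOn (⇑z₂) (uIcc (0:ℝ) T) volume := by
      rw [uIcc_of_le hT.le, integrableOn_Icc_iff_integrableOn_Ioo]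
      exact hz₂mem.integrable one_le_two
    have := intervalIntegral.continuousOn_primitive_interval hIcc
    rwa [uIcc_of_le hT.le] at this
  have hvtH1 : IsH1On T vt (⇑z₂) := by
    refine ⟨?_, hz₂mem, fun t ht => ?_⟩
    · obtain ⟨Cb, hCb⟩ := isCompact_Icc.exists_bound_of_continuousOn hcontOn
      refine MemLp.of_bound
        ((hcontOn.mono Ioo_subset_Icc_self).aestronglyMeasurable measurableSet_Ioo) Cb ?_
      exact ae_restrict_of_forall_mem measurableSet_Ioo
        fun t htI => hCb t (Ioo_subset_Icc_self htI)
    · show vt t = vt 0 + ∫ s in (0:ℝ)..t, (z₂ : ℝ → H) s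
      have h0 : vt 0 = c₀ := by
        rw [hvtdef]
        simp only
        rw [intervalIntegral.integral_same, add_zero]
      rw [h0]
  -- inner products against indicators
  have hinner_ind : ∀ (f : Lp H 2 μ) (v : ℝ → H), ⇑f =ᵐ[μ] v → ∀ t ∈ Icc (0:ℝ) T, ∀ y : H,
      ⟪(indicatorConstLp 2 measurableSet_Ioo (measure_ne_top μ (Ioo 0 t)) y : Lp H 2 μ), f⟫_ℂ
        = ∫ s in (0:ℝ)..t, ⟪y, v s⟫_ℂ := by
    intro f v hfv t ht y
    rw [L2.inner_indicatorConstLp_eq_setIntegral_inner]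
    have hres : μ.restrict (Ioo (0:ℝ) t) = volume.restrict (Ioo (0:ℝ) t) := by
      rw [hμdef, Measure.restrict_restrict measurableSet_Ioo,
        inter_eq_self_of_subset_left (Ioo_subset_Ioo le_rfl ht.2)]
    have e1 : ∫ s in Ioo (0:ℝ) t, ⟪y, f s⟫_ℂ ∂μ = ∫ s in Ioo (0:ℝ) t, ⟪y, v s⟫_ℂ ∂μ := by
      refine integral_congr_ae ?_
      filter_upwards [ae_restrict_of_ae ((hfv.mono fun s hs => by rw [hs]) :
        ∀ᵐ s ∂μ, ⟪y, f s⟫_ℂ = ⟪y, v s⟫_ℂ)] with s hs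
      exact hs
    rw [e1]
    have e2 : ∫ s in Ioo (0:ℝ) t, ⟪y, v s⟫_ℂ ∂μ = ∫ s in Ioo (0:ℝ) t, ⟪y, v s⟫_ℂ := by
      rw [hres]
    rw [e2, intervalIntegral.integral_of_le ht.1, integral_Ioc_eq_integral_Ioo]
  -- pointwise weak convergence
  have hweakpt : ∀ t ∈ Icc (0:ℝ) T, ∀ y : H,
      Tendsto (fun k => ⟪y, u (ψ k) t⟫_ℂ) atTop (nhds ⟪y, vt t⟫_ℂ) := by
    intro t ht y
    have hids : ∀ k, ⟪y, u (ψ k) t⟫_ℂ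
        = ⟪y, u (ψ k) 0⟫_ℂ + ∫ s in (0:ℝ)..t, ⟪y, u' (ψ k) s⟫_ℂ := by
      intro k
      rw [(hu (ψ k)).2.2 t ht, inner_add_right]
      congr 1
      exact ((innerSL ℂ y).intervalIntegral_comp_comm
        ((hu (ψ k)).intervalIntegrable ht)).symm
    have h2 : ∀ k, ∫ s in (0:ℝ)..t, ⟪y, u' (ψ k) s⟫_ℂ
        = ⟪(indicatorConstLp 2 measurableSet_Ioo (measure_ne_top μ (Ioo 0 t)) y : Lp H 2 μ),
            c2 (pn (ψ k))⟫_ℂ :=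
      fun k => (hinner_ind (c2 (pn (ψ k))) (u' (ψ k)) (hu (ψ k)).2.1.coeFn_toLp t ht y).symm
    have h3 : ∫ s in (0:ℝ)..t, ⟪y, (z₂ : ℝ → H) s⟫_ℂ
        = ⟪(indicatorConstLp 2 measurableSet_Ioo (measure_ne_top μ (Ioo 0 t)) y : Lp H 2 μ),
            z₂⟫_ℂ :=
      (hinner_ind z₂ ⇑z₂ (Filter.EventuallyEq.refl _ _) t ht y).symm
    have h4 : Tendsto (fun k => ⟪y, u (ψ k) 0⟫_ℂ
        + ⟪(indicatorConstLp 2 measurableSet_Ioo (measure_ne_top μ (Ioo 0 t)) y : Lp H 2 μ),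
            c2 (pn (ψ k))⟫_ℂ) atTop
        (nhds (⟪y, c₀⟫_ℂ
          + ⟪(indicatorConstLp 2 measurableSet_Ioo (measure_ne_top μ (Ioo 0 t)) y : Lp H 2 μ),
              z₂⟫_ℂ)) :=
      (hwc₀' y).add (hwz₂' _)
    have h5 : ⟪y, vt t⟫_ℂ = ⟪y, c₀⟫_ℂ + ∫ s in (0:ℝ)..t, ⟪y, (z₂ : ℝ → H) s⟫_ℂ := by
      rw [hvtdef]
      simp only
      rw [inner_add_right]
      congr 1
      exact ((innerSL ℂ y).intervalIntegral_comp_comm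
        (memLp2_intervalIntegrable hz₂mem le_rfl ht.1 ht.2)).symm
    rw [h5, h3]
    refine h4.congr fun k => ?_
    rw [hids k, h2 k]
  have hvtS : ∀ t ∈ Icc (0:ℝ) T, vt t ∈ S :=
    fun t ht => hSweak (fun k => u (ψ k) t) (vt t) (fun k => huS (ψ k) t ht) (hweakpt t ht)
  -- identification of the weak limit of the functions
  have hid : (⇑z₁ : ℝ → H) =ᵐ[μ] vt := by
    have hvtm : MemLp vt 2 μ := hvtH1.1
    have hz₁m : MemLp (⇑z₁) 2 μ := Lp.memLp z₁
    have hsubm : Integrable (fun s => vt s - (z₁ : ℝ → H) s) μ :=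
      (hvtm.sub hz₁m).integrable one_le_two
    have hinner0 : ∀ y : H, (fun s => ⟪y, vt s - (z₁ : ℝ → H) s⟫_ℂ) =ᵐ[μ] 0 := by
      intro y
      have hint : Integrable (fun s => ⟪y, vt s - (z₁ : ℝ → H) s⟫_ℂ) μ :=
        (innerSL ℂ y).integrable_comp hsubm
      refine hint.ae_eq_zero_of_forall_setIntegral_eq_zero ?_
      intro A hA hμA
      have hvti : IntegrableOn (fun s => ⟪y, vt s⟫_ℂ) A μ :=
        ((innerSL ℂ y).integrable_comp (hvtm.integrable one_le_two)).integrableOn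
      have hz₁i : IntegrableOn (fun s => ⟪y, (z₁ : ℝ → H) s⟫_ℂ) A μ :=
        ((innerSL ℂ y).integrable_comp (hz₁m.integrable one_le_two)).integrableOn
      have hsplit : ∫ s in A, ⟪y, vt s - (z₁ : ℝ → H) s⟫_ℂ ∂μ
          = (∫ s in A, ⟪y, vt s⟫_ℂ ∂μ) - ∫ s in A, ⟪y, (z₁ : ℝ → H) s⟫_ℂ ∂μ := by
        rw [← integral_sub hvti hz₁i]
        refine integral_congr_ae (Eventually.of_forall fun s => ?_)
        simp only
        rw [inner_sub_right]
      rw [hsplit]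
      have e1 : ∫ s in A, ⟪y, (z₁ : ℝ → H) s⟫_ℂ ∂μ
          = ⟪(indicatorConstLp 2 hA hμA.ne y : Lp H 2 μ), z₁⟫_ℂ :=
        (L2.inner_indicatorConstLp_eq_setIntegral_inner ℂ z₁ hA y hμA.ne).symm
      have e2 : ∀ k, ⟪(indicatorConstLp 2 hA hμA.ne y : Lp H 2 μ), c1 (pn (ψ k))⟫_ℂ
          = ∫ s in A, ⟪y, u (ψ k) s⟫_ℂ ∂μ := by
        intro k
        rw [L2.inner_indicatorConstLp_eq_setIntegral_inner]
        refine integral_congr_ae ?_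
        have hcoe : ⇑(c1 (pn (ψ k))) =ᵐ[μ] u (ψ k) := (hu (ψ k)).1.coeFn_toLp
        filter_upwards [ae_restrict_of_ae hcoe] with s hs
        rw [hs]
      have hae_mem : ∀ᵐ s ∂μ, s ∈ Ioo (0:ℝ) T := ae_restrict_mem measurableSet_Ioo
      have e3 : Tendsto (fun k => ∫ s in A, ⟪y, u (ψ k) s⟫_ℂ ∂μ) atTop
          (nhds (∫ s in A, ⟪y, vt s⟫_ℂ ∂μ)) := by
        refine tendsto_integral_of_dominated_convergence (fun _ => ‖y‖ * B)
          (fun k => ((innerSL ℂ y).continuous.comp_aestronglyMeasurable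
            (hu (ψ k)).1.aestronglyMeasurable).restrict)
          (integrable_const _) ?_ ?_
        · intro k
          refine ae_restrict_of_ae ?_
          filter_upwards [hae_mem] with s hs
          calc ‖⟪y, u (ψ k) s⟫_ℂ‖ ≤ ‖y‖ * ‖u (ψ k) s‖ := norm_inner_le_norm _ _
            _ ≤ ‖y‖ * B :=
              mul_le_mul_of_nonneg_left (hptB _ s (mem_Icc_of_Ioo hs)) (norm_nonneg y)
        · refine ae_restrict_of_ae ?_
          filter_upwards [hae_mem] with s hs
          exact hweakpt s (mem_Icc_of_Ioo hs) y
      have e4 : ∫ s in A, ⟪y, vt s⟫_ℂ ∂μ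
          = ⟪(indicatorConstLp 2 hA hμA.ne y : Lp H 2 μ), z₁⟫_ℂ :=
        tendsto_nhds_unique (e3.congr fun k => (e2 k).symm) (hwz₁' _)
      rw [e4, e1, sub_self]
    have hdseq := TopologicalSpace.denseRange_denseSeq H
    have hae : ∀ᵐ s ∂μ, ∀ k : ℕ,
        ⟪TopologicalSpace.denseSeq H k, vt s - (z₁ : ℝ → H) s⟫_ℂ = 0 :=
      ae_all_iff.mpr fun k => hinner0 (TopologicalSpace.denseSeq H k)
    filter_upwards [hae] with s hsk
    have hallzero : ∀ y : H, ⟪y, vt s - (z₁ : ℝ → H) s⟫_ℂ = 0 := by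
      intro y
      have hcl : IsClosed {y : H | ⟪y, vt s - (z₁ : ℝ → H) s⟫_ℂ = 0} :=
        isClosed_eq (Continuous.inner continuous_id continuous_const) continuous_const
      exact hdseq.induction_on y hcl hsk
    have h0 := hallzero (vt s - (z₁ : ℝ → H) s)
    rw [inner_self_eq_zero] at h0
    exact (sub_eq_zero.mp h0).symm
  -- the weak limit as element of V
  have hqoomem : ((z₁, z₂) : Lp H 2 μ × Lp H 2 μ) ∈ V :=
    ⟨vt, ⇑z₂, hvtH1, hid, Filter.EventuallyEq.refl _ _⟩
  set qoo : V := ⟨(z₁, z₂), hqoomem⟩ with hqoodef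
  have hFbqoo : Fb qoo = F vt ⇑z₂ := hFbSpec _ _ _ hvtH1 hid (Filter.EventuallyEq.refl _ _)
  obtain ⟨ℓ, hℓ⟩ := exists_subgradient_aux G hGcont hGconv qoo
  obtain ⟨Φ, hΦext, -⟩ := exists_extension_norm_eq V ℓ
  -- real continuous linear functionals pass to the weak limit
  have hΘconv : ∀ (Θ : Lp H 2 μ →L[ℝ] ℝ) (x : Lp H 2 μ) (xs : ℕ → Lp H 2 μ),
      (∀ g : Lp H 2 μ, Tendsto (fun k => ⟪g, xs k⟫_ℂ) atTop (nhds ⟪g, x⟫_ℂ)) →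
      Tendsto (fun k => Θ (xs k)) atTop (nhds (Θ x)) := by
    intro Θ x xs hx
    set Ψ : Lp H 2 μ →L[ℂ] ℂ := Θ.extendTo𝕜' with hΨdef
    have hre : ∀ v, (Ψ v).re = Θ v := by
      intro v
      rw [hΨdef]
      exact StrongDual.re_extendRCLike_apply (𝕜 := ℂ) Θ v
    set ζ : Lp H 2 μ := (InnerProductSpace.toDual ℂ (Lp H 2 μ)).symm Ψ with hζdef
    have hζ : ∀ v, ⟪ζ, v⟫_ℂ = Ψ v := fun v => InnerProductSpace.toDual_symm_apply
    have h1 := (Complex.continuous_re.tendsto _).comp (hx ζ)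
    have h2 : ∀ k, (⟪ζ, xs k⟫_ℂ).re = Θ (xs k) := fun k => by rw [hζ]; exact hre _
    have h3 : (⟪ζ, x⟫_ℂ).re = Θ x := by rw [hζ]; exact hre _
    rw [← h3]
    exact h1.congr h2
  have hℓconv : Tendsto (fun k => ℓ (pn (ψ k) - qoo)) atTop (nhds 0) := by
    have hΦ1 := hΘconv (Φ.comp (ContinuousLinearMap.inl ℝ (Lp H 2 μ) (Lp H 2 μ))) z₁
      (fun k => c1 (pn (ψ k))) hwz₁'
    have hΦ2 := hΘconv (Φ.comp (ContinuousLinearMap.inr ℝ (Lp H 2 μ) (Lp H 2 μ))) z₂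
      (fun k => c2 (pn (ψ k))) hwz₂'
    have hsum := hΦ1.add hΦ2
    have hsplit : ∀ p : Lp H 2 μ × Lp H 2 μ,
        Φ ((ContinuousLinearMap.inl ℝ (Lp H 2 μ) (Lp H 2 μ)) p.1)
          + Φ ((ContinuousLinearMap.inr ℝ (Lp H 2 μ) (Lp H 2 μ)) p.2) = Φ p := by
      intro p
      rw [← map_add]
      congr 1
      simp [Prod.ext_iff]
    have hΦtend : Tendsto (fun k => Φ ↑(pn (ψ k))) atTop
        (nhds (Φ ((z₁, z₂) : Lp H 2 μ × Lp H 2 μ))) := by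
      rw [← hsplit ((z₁, z₂) : Lp H 2 μ × Lp H 2 μ)]
      simp only [ContinuousLinearMap.comp_apply] at hsum
      exact hsum.congr fun k => hsplit _
    have h11 := hΦtend.sub_const (Φ ((z₁, z₂) : Lp H 2 μ × Lp H 2 μ))
    rw [sub_self] at h11
    refine h11.congr fun k => ?_
    rw [← hΦext (pn (ψ k) - qoo), ← map_sub]
    rfl
  -- convergence of the cross terms
  have hsconv : Tendsto (fun k => (⟪z₁, c1 (pn (ψ k))⟫_ℂ).re + (⟪z₂, c2 (pn (ψ k))⟫_ℂ).re)
      atTop (nhds (‖z₁‖^2 + ‖z₂‖^2)) := by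
    have h1 := (Complex.continuous_re.tendsto _).comp (hwz₁' z₁)
    have h2 := (Complex.continuous_re.tendsto _).comp (hwz₂' z₂)
    have h3 := h1.add h2
    have e1 : (⟪z₁, z₁⟫_ℂ).re = ‖z₁‖^2 := inner_self_eq_norm_sq (𝕜 := ℂ) z₁
    have e2 : (⟪z₂, z₂⟫_ℂ).re = ‖z₂‖^2 := inner_self_eq_norm_sq (𝕜 := ℂ) z₂
    rw [e1, e2] at h3
    exact h3
  have hchain : ∀ k, G qoo + ℓ (pn (ψ k) - qoo)
      + α * (2 * ((⟪z₁, c1 (pn (ψ k))⟫_ℂ).re + (⟪z₂, c2 (pn (ψ k))⟫_ℂ).re) - Nf qoo)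
      ≤ Fb (pn (ψ k)) := by
    intro k
    have h1 := hℓ (pn (ψ k))
    have h2 := two_inner_re_le_norm_sq z₁ (c1 (pn (ψ k)))
    have h3 := two_inner_re_le_norm_sq z₂ (c2 (pn (ψ k)))
    have h4 : Nf qoo = ‖z₁‖^2 + ‖z₂‖^2 := rfl
    have h5 : G (pn (ψ k)) = Fb (pn (ψ k)) - α * Nf (pn (ψ k)) := rfl
    have h7 : Nf (pn (ψ k)) = ‖c1 (pn (ψ k))‖^2 + ‖c2 (pn (ψ k))‖^2 := rfl
    have h8 : 2 * ((⟪z₁, c1 (pn (ψ k))⟫_ℂ).re + (⟪z₂, c2 (pn (ψ k))⟫_ℂ).re) - Nf qoo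
        ≤ Nf (pn (ψ k)) := by rw [h4, h7]; linarith
    have h9 := mul_le_mul_of_nonneg_left h8 hα.le
    rw [h5] at h1
    linarith
  have hlhs : Tendsto (fun k => G qoo + ℓ (pn (ψ k) - qoo)
      + α * (2 * ((⟪z₁, c1 (pn (ψ k))⟫_ℂ).re + (⟪z₂, c2 (pn (ψ k))⟫_ℂ).re) - Nf qoo))
      atTop (nhds (G qoo + 0 + α * (2 * (‖z₁‖^2 + ‖z₂‖^2) - Nf qoo))) :=
    (tendsto_const_nhds.add hℓconv).add
      (((hsconv.const_mul 2).sub tendsto_const_nhds).const_mul α)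
  have hrhs : Tendsto (fun k => Fb (pn (ψ k))) atTop (nhds m) :=
    hFbtend.comp hψmono.tendsto_atTop
  have hle := le_of_tendsto_of_tendsto' hlhs hrhs hchain
  have hNfq : Nf qoo = ‖z₁‖^2 + ‖z₂‖^2 := rfl
  have hGq : G qoo = Fb qoo - α * Nf qoo := rfl
  have hFbqoole : Fb qoo ≤ m := by
    rw [hGq, hNfq] at hle
    linarith
  refine ⟨vt, ⇑z₂, hvtH1, hvtS, ?_⟩
  intro w w' hw hwS
  have hmem : F w w' ∈ A := ⟨w, w', hw, hwS, rfl⟩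
  calc F vt ⇑z₂ = Fb qoo := hFbqoo.symm
    _ ≤ m := hFbqoole
    _ ≤ F w w' := csInf_le hAbdd hmem
end

section
/- Let X be a complex Hilbert space, B : X × X → ℂ a continuous Hermitian sesquilinear form which is coercive (there exists α > 0 with B(w,w) ≥ α‖w‖² for all w ∈ X), ℓ : X → ℂ a continuous linear functional, c ∈ ℝ, and define the quadratic strongly convex functional F(w) = B(w,w) − 2 Re ℓ(w) + c. Let Σ ⊆ X be a dictionary (λx ∈ Σ for all x ∈ Σ, λ ∈ ℂ; Σ weakly closed; span Σ dense in X). Suppose (G_r)_{r≥1} is a sequence in Σ such that for every r ≥ 1, G_r minimizes G ↦ F(G₁ + … + G_{r−1} + G) over G ∈ Σ. Then the partial sums S_r = G₁ + … + G_r converge strongly in X, as r → ∞, to the unique global minimizer of F over X. -/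
set_option maxHeartbeats 2000000


open Filter
open scoped InnerProductSpace

/-- **convergence of the greedy algorithm.** Let `X` be a complex Hilbert
space, `B` a continuous Hermitian coercive sesquilinear form, `ℓ` a continuous linear
functional, `c ∈ ℝ`, and `F(w) = B(w,w) − 2 Re ℓ(w) + c`.  Let `Σ` be a dictionary and let
`(G_r)` be a greedy sequence for `F` relative to `Σ`.  Then the partial sums
`S_r = G_1 + … + G_r` converge strongly to the unique global minimizer of `F` over `X`. -/
theorem greedy_algorithm_converges
    {X : Type*} [NormedAddCommGroup X] [InnerProductSpace ℂ X] [CompleteSpace X]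
    (B : X → X → ℂ)
    -- `B` is sesquilinear (linear in the second variable, Hermitian symmetry below)
    (hadd : ∀ w z₁ z₂, B w (z₁ + z₂) = B w z₁ + B w z₂)
    (hsmul : ∀ (w z : X) (lam : ℂ), B w (lam • z) = lam * B w z)
    -- `B` is Hermitian
    (hherm : ∀ w z, B z w = starRingEnd ℂ (B w z))
    -- `B` is continuous
    (hcont : ∃ Cb : ℝ, ∀ w z, ‖B w z‖ ≤ Cb * ‖w‖ * ‖z‖)
    -- `B` is coercive with constant `α > 0`
    (α : ℝ) (hα : 0 < α) (hcoer : ∀ w, α * ‖w‖ ^ 2 ≤ (B w w).re)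
    (ℓ : X →L[ℂ] ℂ) (c : ℝ)
    (F : X → ℝ) (hF : ∀ w, F w = (B w w).re - 2 * (ℓ w).re + c)
    (Dct : Set X)
    -- `Σ` is a dictionary:
    (hdict₁ : ∀ x ∈ Dct, ∀ lam : ℂ, lam • x ∈ Dct)
    (hdict₂ : IsClosed (toWeakSpace ℂ X '' Dct))
    (hdict₃ : Dense (↑(Submodule.span ℂ Dct) : Set X))
    -- greedy sequence: each `G r` minimizes `G ↦ F(S r + G)` over `Σ`
    (G : ℕ → X) (hG : ∀ r, G r ∈ Dct)
    (hgreedy : ∀ r : ℕ, ∀ g ∈ Dct,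
      F (∑ i ∈ Finset.range r, G i + G r) ≤ F (∑ i ∈ Finset.range r, G i + g)) :
    ∃ u : X, (∀ w : X, F u ≤ F w) ∧ (∀ w : X, (∀ z : X, F w ≤ F z) → w = u) ∧
      Tendsto (fun r => ∑ i ∈ Finset.range r, G i) atTop (nhds u) := by
  classical
  obtain ⟨Cb, hCb⟩ := hcont
  set C : ℝ := max Cb 0 with hCdef
  have hC0 : 0 ≤ C := le_max_right _ _
  have hBbound : ∀ w z : X, ‖B w z‖ ≤ C * ‖w‖ * ‖z‖ := by
    intro w z
    refine (hCb w z).trans ?_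
    have h1 : Cb ≤ C := le_max_left _ _
    nlinarith [norm_nonneg w, norm_nonneg z, mul_nonneg (norm_nonneg w) (norm_nonneg z)]
  -- linearity in the first variable
  have hadd₁ : ∀ w₁ w₂ z : X, B (w₁ + w₂) z = B w₁ z + B w₂ z := by
    intro w₁ w₂ z
    rw [hherm z (w₁ + w₂), hadd, map_add, ← hherm z w₁, ← hherm z w₂]
  have hzero₂ : ∀ w : X, B w 0 = 0 := by
    intro w
    have h := hsmul w 0 0
    simpa using h
  have hsub₂ : ∀ w z₁ z₂ : X, B w (z₁ - z₂) = B w z₁ - B w z₂ := by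
    intro w z₁ z₂
    have h : B w (z₁ - z₂) + B w z₂ = B w z₁ := by
      rw [← hadd, sub_add_cancel]
    exact eq_sub_of_add_eq h
  have hsub₁ : ∀ w₁ w₂ z : X, B (w₁ - w₂) z = B w₁ z - B w₂ z := by
    intro w₁ w₂ z
    rw [hherm z (w₁ - w₂), hsub₂, map_sub, ← hherm z w₁, ← hherm z w₂]
  have hq0 : ∀ w : X, 0 ≤ (B w w).re := by
    intro w
    exact le_trans (by positivity) (hcoer w)
  have hqzero : ∀ w : X, (B w w).re = 0 → w = 0 := by
    intro w hw
    have h1 := hcoer w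
    rw [hw] at h1
    have h2 : ‖w‖ = 0 := by
      by_contra hne
      have hpos : 0 < ‖w‖ := lt_of_le_of_ne (norm_nonneg w) (Ne.symm hne)
      nlinarith [mul_pos hα (pow_pos hpos 2)]
    exact norm_eq_zero.mp h2
  set S : ℕ → X := fun r => ∑ i ∈ Finset.range r, G i with hSdef
  set f : ℕ → ℝ := fun n => F (S n) with hfdef
  have hSsucc : ∀ n, S (n + 1) = S n + G n := fun n => Finset.sum_range_succ G n
  -- expansion of F
  have hFexp : ∀ v h : X, F (v + h) = F v + 2 * (B v h - ℓ h).re + (B h h).re := by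
    intro v h
    have hB : B (v + h) (v + h) = B v v + B v h + (B h v + B h h) := by
      rw [hadd₁, hadd, hadd]
    have hRe : (B h v).re = (B v h).re := by rw [hherm v h, Complex.conj_re]
    rw [hF, hF, hB, map_add]
    simp only [Complex.add_re, Complex.sub_re, hRe]
    ring
  have hFscale : ∀ (v g : X) (lam : ℂ),
      F (v + lam • g) = F v + 2 * (lam * (B v g - ℓ g)).re + ‖lam‖ ^ 2 * (B g g).re := by
    intro v g lam
    rw [hFexp v (lam • g)]
    have e1 : B v (lam • g) = lam * B v g := hsmul v g lam
    have e2 : ℓ (lam • g) = lam * ℓ g := by simp [map_smul, smul_eq_mul]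
    have e3 : B (lam • g) (lam • g) = lam * (starRingEnd ℂ lam * B g g) := by
      rw [hsmul]
      congr 1
      rw [hherm g (lam • g), hsmul, map_mul, ← hherm g g]
    have e4 : (lam * (starRingEnd ℂ lam * B g g)).re = ‖lam‖ ^ 2 * (B g g).re := by
      rw [← mul_assoc, Complex.mul_conj, Complex.re_ofReal_mul,
        Complex.sq_norm]
    rw [e1, e2, e3, e4]
    congr 2
    rw [mul_sub]
  -- the greedy inequality
  set D : ℕ → X → ℂ := fun n g => B (S n) g - ℓ g with hDdef
  set b : ℕ → ℝ := fun n => f n - f (n + 1) with hbdef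
  have hstep : ∀ n : ℕ, ∀ g ∈ Dct, ∀ lam : ℂ,
      f (n + 1) ≤ f n + 2 * (lam * D n g).re + ‖lam‖ ^ 2 * (B g g).re := by
    intro n g hg lam
    have h1 := hgreedy n (lam • g) (hdict₁ g hg lam)
    calc f (n + 1) = F (S n + G n) := by rw [hfdef]; simp only; rw [hSsucc n]
      _ ≤ F (S n + lam • g) := h1
      _ = _ := by rw [hFscale]
  -- the correlation bound
  have hcorr : ∀ n : ℕ, ∀ g ∈ Dct, ‖D n g‖ ^ 2 ≤ b n * (B g g).re := by
    intro n g hg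
    by_cases hQ : (B g g).re = 0
    · have hg0 : g = 0 := hqzero g hQ
      have : D n g = 0 := by
        rw [hDdef]; simp only; rw [hg0, hzero₂]; simp
      rw [this, hQ]
      simp
    · have hQpos : 0 < (B g g).re := lt_of_le_of_ne (hq0 g) (Ne.symm hQ)
      set Q := (B g g).re with hQdef
      set d := ‖D n g‖ ^ 2 with hddef
      have key : ∀ t : ℝ, f (n + 1) ≤ f n - 2 * t * d + t ^ 2 * d * Q := by
        intro t
        have h := hstep n g hg (-(t : ℂ) * starRingEnd ℂ (D n g))
        have e1 : (-(t : ℂ) * starRingEnd ℂ (D n g) * D n g).re = -(t * d) := by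
          rw [mul_assoc, mul_comm (starRingEnd ℂ (D n g)), Complex.mul_conj]
          rw [hddef, Complex.sq_norm]
          simp [Complex.re_ofReal_mul]
        have e2 : ‖-(t : ℂ) * starRingEnd ℂ (D n g)‖ ^ 2 = t ^ 2 * d := by
          rw [hddef, norm_mul, norm_neg, mul_pow, Complex.norm_real,
            Real.norm_eq_abs, sq_abs, Complex.norm_conj]
        rw [e1, e2] at h
        calc f (n + 1) ≤ f n + 2 * -(t * d) + t ^ 2 * d * Q := h
          _ = f n - 2 * t * d + t ^ 2 * d * Q := by ring
      have h2 := key (1 / Q)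
      have e3 : f n - 2 * (1 / Q) * d + (1 / Q) ^ 2 * d * Q = f n - d / Q := by
        field_simp
        ring
      rw [e3] at h2
      have h4 : d / Q ≤ f n - f (n + 1) := by linarith
      rw [div_le_iff₀ hQpos] at h4
      have hbn : b n = f n - f (n + 1) := rfl
      rw [hbn]
      linarith
  -- the exact decrement
  have hbq : ∀ n : ℕ, b n = (B (G n) (G n)).re := by
    intro n
    set Q := (B (G n) (G n)).re with hQdef
    have hfe : f (n + 1) = f n + 2 * (D n (G n)).re + Q := by
      have : f (n + 1) = F (S n + G n) := by rw [hfdef]; simp only; rw [hSsucc n]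
      rw [this, hFexp]
    have hA := hcorr n (G n) (hG n)
    have hre : (D n (G n)).re ^ 2 ≤ ‖D n (G n)‖ ^ 2 := by
      have h1 := Complex.abs_re_le_norm (D n (G n))
      nlinarith [h1, abs_nonneg (D n (G n)).re, sq_abs (D n (G n)).re]
    have hb_eq : b n = -2 * (D n (G n)).re - Q := by
      have hbn : b n = f n - f (n + 1) := rfl
      rw [hbn]; linarith
    rw [hb_eq] at hA
    have h0 : ((D n (G n)).re + Q) ^ 2 ≤ 0 := by nlinarith
    have h1 : (D n (G n)).re + Q = 0 := by
      have := sq_nonneg ((D n (G n)).re + Q)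
      have h2 : ((D n (G n)).re + Q) ^ 2 = 0 := le_antisymm h0 this
      exact pow_eq_zero_iff (by norm_num) |>.mp h2
    rw [hb_eq]
    linarith
  have hb_nonneg : ∀ n, 0 ≤ b n := fun n => (hbq n) ▸ hq0 (G n)
  have hf_anti : Antitone f := by
    apply antitone_nat_of_succ_le
    intro n
    have h1 := hb_nonneg n
    have hbn : b n = f n - f (n + 1) := rfl
    rw [hbn] at h1
    linarith
  -- f is bounded below
  have hflb : ∀ n, c - ‖ℓ‖ ^ 2 / α ≤ f n := by
    intro n
    have h1 : (ℓ (S n)).re ≤ ‖ℓ‖ * ‖S n‖ := by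
      refine le_trans (Complex.re_le_norm _) ?_
      exact ℓ.le_opNorm _
    have h2 := hcoer (S n)
    have hfn : f n = (B (S n) (S n)).re - 2 * (ℓ (S n)).re + c := by
      have : f n = F (S n) := rfl
      rw [this, hF]
    rw [hfn]
    have hdiv : ‖ℓ‖ ^ 2 / α * α = ‖ℓ‖ ^ 2 := div_mul_cancel₀ _ (ne_of_gt hα)
    nlinarith [sq_nonneg (α * ‖S n‖ - ‖ℓ‖), norm_nonneg (S n), norm_nonneg ℓ,
      mul_pos hα hα]
  have hbdd : BddBelow (Set.range f) := by
    refine ⟨c - ‖ℓ‖ ^ 2 / α, ?_⟩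
    rintro x ⟨n, rfl⟩
    exact hflb n
  have hfL : Tendsto f atTop (nhds (⨅ n, f n)) := tendsto_atTop_ciInf hf_anti hbdd
  set L : ℝ := ⨅ n, f n with hLdef
  have hLle : ∀ n, L ≤ f n := fun n => ciInf_le hbdd n
  -- telescoping
  have hrangesum : ∀ j : ℕ, ∑ k ∈ Finset.range j, b k = f 0 - f j := by
    intro j
    have : ∀ k, b k = f k - f (k + 1) := fun k => rfl
    calc ∑ k ∈ Finset.range j, b k = ∑ k ∈ Finset.range j, (f k - f (k + 1)) := by
          exact Finset.sum_congr rfl fun k _ => this k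
      _ = f 0 - f j := Finset.sum_range_sub' f j
  have htel : ∀ m n : ℕ, m ≤ n → ∑ k ∈ Finset.Ico m n, b k = f m - f n := by
    intro m n hmn
    rw [Finset.sum_Ico_eq_sub _ hmn, hrangesum, hrangesum]
    ring
  have hbsum : Summable b := by
    apply summable_of_sum_range_le hb_nonneg (c := f 0 - L)
    intro n
    rw [hrangesum]
    have := hLle n
    linarith
  have hb0 : Tendsto b atTop (nhds 0) := hbsum.tendsto_atTop_zero
  -- there are infinitely many n with (n+1) * b n small
  have hgood : ∀ δ : ℝ, 0 < δ → ∀ N : ℕ, ∃ n, N ≤ n ∧ ((n : ℝ) + 1) * b n < δ := by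
    intro δ hδ N
    by_contra hcon
    push_neg at hcon
    have hcmp : Summable (fun k : ℕ => δ * (1 / ((k : ℝ) + N + 1))) := by
      have hshift : Summable (fun k : ℕ => b (k + N)) :=
        (summable_nat_add_iff N).mpr hbsum
      refine Summable.of_nonneg_of_le (fun k => by positivity) ?_ hshift
      intro k
      have h := hcon (k + N) (Nat.le_add_left N k)
      have hk : (0 : ℝ) < (k : ℝ) + N + 1 := by positivity
      rw [mul_one_div, div_le_iff₀ hk]
      push_cast at h ⊢
      nlinarith [h]
    have hsum1 : Summable (fun k : ℕ => 1 / ((k : ℝ) + N + 1)) := by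
      have h2 := hcmp.mul_left δ⁻¹
      have he : (fun k : ℕ => δ⁻¹ * (δ * (1 / ((k : ℝ) + N + 1))))
          = fun k : ℕ => 1 / ((k : ℝ) + N + 1) := by
        funext k
        field_simp
      rwa [he] at h2
    have hsum2 : Summable (fun k : ℕ => 1 / ((k : ℝ) + 1)) := by
      refine (summable_nat_add_iff N).mp ?_
      have he : (fun k : ℕ => 1 / (((k + N : ℕ) : ℝ) + 1))
          = fun k : ℕ => 1 / ((k : ℝ) + N + 1) := by
        funext k
        push_cast
        ring_nf
      rw [he]
      exact hsum1
    have hsum3 : Summable (fun k : ℕ => 1 / (k : ℝ)) := by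
      refine (summable_nat_add_iff 1).mp ?_
      have he : (fun k : ℕ => 1 / (((k + 1 : ℕ) : ℝ)))
          = fun k : ℕ => 1 / ((k : ℝ) + 1) := by
        funext k
        push_cast
        ring_nf
      rw [he]
      exact hsum2
    exact Real.not_summable_one_div_natCast hsum3
  -- algebra: the key identity
  have hkey : ∀ x y : X, (B (x - y) (x - y)).re
      = ((B y y).re - 2 * (ℓ y).re) - ((B x x).re - 2 * (ℓ x).re)
        + 2 * (B x (x - y) - ℓ (x - y)).re := by
    intro x y
    have e1 : B (x - y) (x - y) = B x x - B x y - (B y x - B y y) := by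
      rw [hsub₁, hsub₂, hsub₂]
    have e2 : (B y x).re = (B x y).re := by rw [hherm x y, Complex.conj_re]
    rw [e1]
    simp only [Complex.sub_re, Complex.add_re, map_sub, hsub₂, e2]
    ring
  -- B v is additive over sums
  have hBsum : ∀ (v : X) (s : Finset ℕ), B v (∑ k ∈ s, G k) = ∑ k ∈ s, B v (G k) := by
    intro v s
    induction s using Finset.cons_induction with
    | empty => simpa using hzero₂ v
    | cons a s ha ih => rw [Finset.sum_cons, Finset.sum_cons, hadd, ih]
  -- Cauchy-Schwarz for the sqrt sums
  have hCS : ∀ m n : ℕ, m ≤ n → ∑ k ∈ Finset.Ico m n, Real.sqrt (b k)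
      ≤ Real.sqrt (((n : ℝ) + 1) * (f m - f n)) := by
    intro m n hmn
    have h1 : (∑ k ∈ Finset.Ico m n, Real.sqrt (b k)) ^ 2
        ≤ ((Finset.Ico m n).card : ℝ) * ∑ k ∈ Finset.Ico m n, Real.sqrt (b k) ^ 2 :=
      sq_sum_le_card_mul_sum_sq
    have h2 : ∑ k ∈ Finset.Ico m n, Real.sqrt (b k) ^ 2 = f m - f n := by
      rw [← htel m n hmn]
      exact Finset.sum_congr rfl fun k _ => Real.sq_sqrt (hb_nonneg k)
    rw [h2] at h1
    have h3 : ((Finset.Ico m n).card : ℝ) ≤ (n : ℝ) + 1 := by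
      rw [Nat.card_Ico]
      have : (n - m : ℕ) ≤ n := Nat.sub_le n m
      calc ((n - m : ℕ) : ℝ) ≤ (n : ℝ) := by exact_mod_cast this
        _ ≤ (n : ℝ) + 1 := by linarith
    have h4 : 0 ≤ f m - f n := by
      have := hf_anti hmn
      linarith
    have h5 : (∑ k ∈ Finset.Ico m n, Real.sqrt (b k)) ^ 2 ≤ ((n : ℝ) + 1) * (f m - f n) := by
      refine h1.trans ?_
      apply mul_le_mul_of_nonneg_right h3 h4
    exact (Real.le_sqrt (Finset.sum_nonneg fun k _ => Real.sqrt_nonneg _)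
      (by positivity)).mpr h5
  -- the main estimate
  have hmain : ∀ m n : ℕ, m ≤ n →
      α * ‖S n - S m‖ ^ 2 ≤ (f m - f n)
        + 2 * Real.sqrt (b n * (((n : ℝ) + 1) * (f m - f n))) := by
    intro m n hmn
    have hw : S n - S m = ∑ k ∈ Finset.Ico m n, G k := by
      rw [hSdef]
      simp only
      rw [Finset.sum_Ico_eq_sub _ hmn]
    have h4 : 0 ≤ f m - f n := by
      have := hf_anti hmn
      linarith
    -- step 1: identity
    have hid : (B (S n - S m) (S n - S m)).re
        = (f m - f n) + 2 * (B (S n) (S n - S m) - ℓ (S n - S m)).re := by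
      have h0 := hkey (S n) (S m)
      have hfm : f m = (B (S m) (S m)).re - 2 * (ℓ (S m)).re + c := by
        have : f m = F (S m) := rfl
        rw [this, hF]
      have hfn : f n = (B (S n) (S n)).re - 2 * (ℓ (S n)).re + c := by
        have : f n = F (S n) := rfl
        rw [this, hF]
      rw [h0, hfm, hfn]
      ring
    -- step 2: split the correlation term as a sum
    have hsplit : B (S n) (S n - S m) - ℓ (S n - S m)
        = ∑ k ∈ Finset.Ico m n, D n (G k) := by
      rw [hw, hBsum, map_sum, ← Finset.sum_sub_distrib]
    -- step 3: bound the real part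
    have hbnd : (B (S n) (S n - S m) - ℓ (S n - S m)).re
        ≤ Real.sqrt (b n * (((n : ℝ) + 1) * (f m - f n))) := by
      rw [hsplit, Complex.re_sum]
      have hterm : ∀ k ∈ Finset.Ico m n, (D n (G k)).re
          ≤ Real.sqrt (b n) * Real.sqrt (b k) := by
        intro k _
        have h1 : (D n (G k)).re ≤ ‖D n (G k)‖ := by
          refine le_trans (Complex.re_le_norm _) ?_
          exact le_rfl
        have h2 : ‖D n (G k)‖ ^ 2 ≤ b n * b k := by
          have := hcorr n (G k) (hG k)
          rwa [← hbq k] at this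
        have h3 : ‖D n (G k)‖ ≤ Real.sqrt (b n * b k) :=
          (Real.le_sqrt (norm_nonneg _) (mul_nonneg (hb_nonneg n) (hb_nonneg k))).mpr h2
        refine le_trans h1 (h3.trans ?_)
        rw [Real.sqrt_mul (hb_nonneg n)]
      calc ∑ k ∈ Finset.Ico m n, (D n (G k)).re
          ≤ ∑ k ∈ Finset.Ico m n, Real.sqrt (b n) * Real.sqrt (b k) :=
            Finset.sum_le_sum hterm
        _ = Real.sqrt (b n) * ∑ k ∈ Finset.Ico m n, Real.sqrt (b k) := by
            rw [Finset.mul_sum]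
        _ ≤ Real.sqrt (b n) * Real.sqrt (((n : ℝ) + 1) * (f m - f n)) := by
            apply mul_le_mul_of_nonneg_left (hCS m n hmn) (Real.sqrt_nonneg _)
        _ = Real.sqrt (b n * (((n : ℝ) + 1) * (f m - f n))) := by
            rw [Real.sqrt_mul (hb_nonneg n)]
    have hco := hcoer (S n - S m)
    calc α * ‖S n - S m‖ ^ 2 ≤ (B (S n - S m) (S n - S m)).re := hco
      _ = (f m - f n) + 2 * (B (S n) (S n - S m) - ℓ (S n - S m)).re := hid
      _ ≤ (f m - f n) + 2 * Real.sqrt (b n * (((n : ℝ) + 1) * (f m - f n))) := by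
          linarith [hbnd]
  -- the partial sums form a Cauchy sequence
  have hcauchy : CauchySeq S := by
    rw [Metric.cauchySeq_iff]
    intro ε hε
    set δ : ℝ := α * (ε / 3) ^ 2 / 3 with hδdef
    have hδ : 0 < δ := by positivity
    obtain ⟨M, hM⟩ : ∃ M : ℕ, ∀ m, M ≤ m → f m - L < δ := by
      have h1 := Metric.tendsto_atTop.mp hfL δ hδ
      obtain ⟨M, hM⟩ := h1
      refine ⟨M, fun m hm => ?_⟩
      have := hM m hm
      rw [Real.dist_eq, abs_lt] at this
      linarith [this.2]
    have hsmall : ∀ m, M ≤ m → ∀ n, m ≤ n → ((n : ℝ) + 1) * b n < δ →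
        ‖S n - S m‖ ≤ ε / 3 := by
      intro m hm n hmn hnb
      have h1 := hmain m n hmn
      have h2 : f m - f n < δ := by
        have := hLle n
        have := hM m hm
        linarith
      have h4 : 0 ≤ f m - f n := by
        have := hf_anti hmn
        linarith
      have h5 : b n * (((n : ℝ) + 1) * (f m - f n)) ≤ δ * δ := by
        have hb := hb_nonneg n
        have hn1 : (0 : ℝ) ≤ (n : ℝ) + 1 := by positivity
        calc b n * (((n : ℝ) + 1) * (f m - f n)) = (((n : ℝ) + 1) * b n) * (f m - f n) := by
              ring
          _ ≤ δ * δ := by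
              apply mul_le_mul (le_of_lt hnb) (le_of_lt h2) h4 (le_of_lt hδ)
      have h6 : Real.sqrt (b n * (((n : ℝ) + 1) * (f m - f n))) ≤ δ := by
        calc Real.sqrt (b n * (((n : ℝ) + 1) * (f m - f n))) ≤ Real.sqrt (δ * δ) :=
              Real.sqrt_le_sqrt h5
          _ = δ := Real.sqrt_mul_self (le_of_lt hδ)
      have h7 : α * ‖S n - S m‖ ^ 2 ≤ 3 * δ := by linarith
      have h8 : ‖S n - S m‖ ^ 2 ≤ (ε / 3) ^ 2 := by
        rw [hδdef] at h7
        have hα' := hα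
        nlinarith
      nlinarith [norm_nonneg (S n - S m), sq_nonneg (‖S n - S m‖ - ε / 3),
        sq_nonneg (‖S n - S m‖ + ε / 3)]
    refine ⟨M, fun m₁ hm₁ m₂ hm₂ => ?_⟩
    obtain ⟨n, hn1, hn2⟩ := hgood δ hδ (max m₁ m₂)
    have hn₁ : m₁ ≤ n := le_trans (le_max_left _ _) hn1
    have hn₂ : m₂ ≤ n := le_trans (le_max_right _ _) hn1
    have e1 := hsmall m₁ hm₁ n hn₁ hn2
    have e2 := hsmall m₂ hm₂ n hn₂ hn2
    rw [dist_eq_norm]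
    calc ‖S m₁ - S m₂‖ = ‖(S m₁ - S n) + (S n - S m₂)‖ := by
          congr 1
          abel
      _ ≤ ‖S m₁ - S n‖ + ‖S n - S m₂‖ := norm_add_le _ _
      _ = ‖S n - S m₁‖ + ‖S n - S m₂‖ := by rw [norm_sub_rev (S m₁)]
      _ ≤ ε / 3 + ε / 3 := add_le_add e1 e2
      _ < ε := by linarith
  obtain ⟨u, hu⟩ := cauchySeq_tendsto_of_complete hcauchy
  -- the limit satisfies B u g = ℓ g for all g in the dictionary
  have horth : ∀ g ∈ Dct, B u g = ℓ g := by
    intro g hg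
    have hSu : Tendsto (fun n => ‖S n - u‖) atTop (nhds 0) := by
      have h0 : Tendsto (fun n => S n - u) atTop (nhds 0) :=
        tendsto_sub_nhds_zero_iff.mpr hu
      simpa using h0.norm
    have h1 : Tendsto (fun n => B (S n) g) atTop (nhds (B u g)) := by
      rw [← tendsto_sub_nhds_zero_iff]
      apply squeeze_zero_norm (a := fun n => C * ‖g‖ * ‖S n - u‖)
      · intro n
        have e : B (S n) g - B u g = B (S n - u) g := (hsub₁ _ _ _).symm
        rw [e]
        calc ‖B (S n - u) g‖ ≤ C * ‖S n - u‖ * ‖g‖ := hBbound _ _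
          _ = C * ‖g‖ * ‖S n - u‖ := by ring
      · simpa using hSu.const_mul (C * ‖g‖)
    have h2 : Tendsto (fun n => B (S n) g) atTop (nhds (ℓ g)) := by
      rw [← tendsto_sub_nhds_zero_iff]
      apply squeeze_zero_norm (a := fun n => Real.sqrt (b n * (B g g).re))
      · intro n
        have hc := hcorr n g hg
        exact (Real.le_sqrt (norm_nonneg _)
          (mul_nonneg (hb_nonneg n) (hq0 g))).mpr hc
      · have h3 : Tendsto (fun n => b n * (B g g).re) atTop (nhds 0) := by
          simpa using hb0.mul_const ((B g g).re)
        have h4 := h3.sqrt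
        simpa using h4
    exact tendsto_nhds_unique h1 h2
  -- extend to the whole space by density
  have horthall : ∀ w : X, B u w = ℓ w := by
    have hcontBu : Continuous fun w : X => B u w := by
      have hlip : LipschitzWith (Real.toNNReal (C * ‖u‖)) (fun w : X => B u w) := by
        apply LipschitzWith.of_dist_le_mul
        intro w₁ w₂
        rw [dist_eq_norm, dist_eq_norm]
        have e : B u w₁ - B u w₂ = B u (w₁ - w₂) := (hsub₂ u w₁ w₂).symm
        rw [e]
        calc ‖B u (w₁ - w₂)‖ ≤ C * ‖u‖ * ‖w₁ - w₂‖ := hBbound _ _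
          _ ≤ (Real.toNNReal (C * ‖u‖) : ℝ) * ‖w₁ - w₂‖ := by
              apply mul_le_mul_of_nonneg_right _ (norm_nonneg _)
              exact le_of_eq (Real.coe_toNNReal _ (by positivity)).symm
      exact hlip.continuous
    have hclosed : IsClosed {w : X | B u w = ℓ w} := isClosed_eq hcontBu ℓ.continuous
    let lm : X →ₗ[ℂ] ℂ :=
      { toFun := fun w => B u w - ℓ w
        map_add' := by
          intro a b'
          show B u (a + b') - ℓ (a + b') = (B u a - ℓ a) + (B u b' - ℓ b')
          rw [hadd, map_add]
          ring
        map_smul' := by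
          intro m a
          show B u (m • a) - ℓ (m • a) = RingHom.id ℂ m • (B u a - ℓ a)
          rw [hsmul, map_smul, RingHom.id_apply, smul_eq_mul, smul_eq_mul]
          ring }
    have hker : Submodule.span ℂ Dct ≤ LinearMap.ker lm := by
      rw [Submodule.span_le]
      intro g hg
      have : B u g - ℓ g = 0 := by rw [horth g hg]; ring
      simpa [lm, LinearMap.mem_ker] using this
    have hsubset : (Submodule.span ℂ Dct : Set X) ⊆ {w : X | B u w = ℓ w} := by
      intro z hz
      have hz' := hker hz
      rw [LinearMap.mem_ker] at hz'
      have : B u z - ℓ z = 0 := hz'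
      exact sub_eq_zero.mp this
    intro w
    have hwcl : w ∈ closure (Submodule.span ℂ Dct : Set X) := by
      rw [hdict₃.closure_eq]
      trivial
    have := (IsClosed.closure_subset_iff hclosed).mpr hsubset hwcl
    exact this
  -- conclusion
  have hFw : ∀ w : X, F w = F u + (B (w - u) (w - u)).re := by
    intro w
    have e : u + (w - u) = w := by abel
    have h1 := hFexp u (w - u)
    rw [e] at h1
    rw [h1, horthall (w - u), sub_self]
    simp
  refine ⟨u, ?_, ?_, hu⟩
  · intro w
    have := hFw w
    have := hq0 (w - u)
    linarith
  · intro w hw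
    have h1 := hw u
    have h2 := hFw w
    have h3 := hcoer (w - u)
    have h4 : ‖w - u‖ ^ 2 ≤ 0 := by nlinarith
    have h5 : ‖w - u‖ = 0 := by
      have := sq_nonneg ‖w - u‖
      have h6 : ‖w - u‖ ^ 2 = 0 := le_antisymm h4 this
      exact pow_eq_zero_iff (by norm_num) |>.mp h6
    have h7 : w - u = 0 := norm_eq_zero.mp h5
    exact sub_eq_zero.mp h7
end

section
/- Let d ≥ 1 and A be a real symmetric invertible d×d matrix. Then for every smooth compactly supported function u : ℝ^d → ℂ, the oscillatory integral ∫_{ℝ^d} e^{(iω/2) x·Ax} u(x) dx tends to 0 as ω → +∞. -/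
open MeasureTheory Filter Complex
open scoped ENNReal RealInnerProductSpace

namespace OscAux

lemma re_half (ω c : ℝ) : (Complex.I * (ω : ℂ) / 2 * (c : ℂ)).re = 0 := by
  have h : Complex.I * (ω : ℂ) / 2 * (c : ℂ) = Complex.I * ((ω / 2 * c : ℝ) : ℂ) := by
    push_cast; ring
  rw [h]
  simp

lemma re_full (ω c : ℝ) : (Complex.I * (ω : ℂ) * (c : ℂ)).re = 0 := by
  have h : Complex.I * (ω : ℂ) * (c : ℂ) = Complex.I * ((ω * c : ℝ) : ℂ) := by
    push_cast; ring
  rw [h]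
  simp

/-- Norm of the exponential of a purely imaginary number is 1. -/
lemma norm_cexp_of_re_eq_zero (z : ℂ) (hz : z.re = 0) : ‖Complex.exp z‖ = 1 := by
  rw [Complex.norm_exp, hz, Real.exp_zero]

/-- Riemann–Lebesgue lemma specialized to a ray `ω ↦ ω • w₀`. -/
lemma RL (d : ℕ) (w₀ : EuclideanSpace ℝ (Fin d)) (hw : w₀ ≠ 0)
    (f : EuclideanSpace ℝ (Fin d) → ℂ) :
    Tendsto (fun ω : ℝ => ∫ v, Complex.exp (Complex.I * (ω : ℂ) * ((⟪v, w₀⟫ : ℝ) : ℂ)) * f v)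
      atTop (nhds 0) := by
  have h1 := tendsto_integral_exp_inner_smul_cocompact (V := EuclideanSpace ℝ (Fin d)) f
  have hφ : Tendsto (fun ω : ℝ => (-(ω / (2 * Real.pi))) • w₀) atTop
      (cocompact (EuclideanSpace ℝ (Fin d))) := by
    rw [← Metric.cobounded_eq_cocompact, ← tendsto_norm_atTop_iff_cobounded]
    simp only [norm_smul, Real.norm_eq_abs, abs_neg]
    have h2 : Tendsto (fun ω : ℝ => |ω / (2 * Real.pi)|) atTop atTop :=
      tendsto_abs_atTop_atTop.comp (tendsto_id.atTop_div_const (by positivity))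
    exact h2.atTop_mul_const (norm_pos_iff.mpr hw)
  have h3 := h1.comp hφ
  refine h3.congr fun ω => ?_
  simp only [Function.comp_apply]
  refine integral_congr_ae (Filter.Eventually.of_forall fun v => ?_)
  dsimp only
  rw [real_inner_smul_right, Circle.smul_def, Real.fourierChar_apply, smul_eq_mul]
  congr 1
  have hπ : (2 * Real.pi) ≠ 0 := by positivity
  have : 2 * Real.pi * -(-(ω / (2 * Real.pi)) * ⟪v, w₀⟫) = ω * ⟪v, w₀⟫ := by
    field_simp
  rw [this]
  push_cast
  ring


/-- Correlation trick: product of an integral with another integral, after shifting. -/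
lemma prod_integral_shift {d : ℕ} {f g : (Fin d → ℝ) → ℂ}
    (hfc : Continuous f) (hfs : HasCompactSupport f)
    (hgc : Continuous g) (hgs : HasCompactSupport g) :
    (∫ x : Fin d → ℝ, f x) * (∫ y : Fin d → ℝ, g y) =
      ∫ h : Fin d → ℝ, ∫ y : Fin d → ℝ, f (y + h) * g y := by
  have hfg : HasCompactSupport (fun p : (Fin d → ℝ) × (Fin d → ℝ) => f p.1 * g p.2) := by
    apply HasCompactSupport.intro (hfs.prod hgs)
    intro p hp
    rw [Set.mem_prod] at hp
    push_neg at hp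
    by_cases h1 : p.1 ∈ tsupport f
    · rw [image_eq_zero_of_notMem_tsupport (hp h1), mul_zero]
    · rw [image_eq_zero_of_notMem_tsupport h1, zero_mul]
  have hc : Continuous fun p : (Fin d → ℝ) × (Fin d → ℝ) => f p.1 * g p.2 :=
    (hfc.comp continuous_fst).mul (hgc.comp continuous_snd)
  have hint1 : Integrable (Function.uncurry fun x y : Fin d → ℝ => f x * g y)
      (volume.prod volume) :=
    hc.integrable_of_hasCompactSupport hfg
  let e₂ : ((Fin d → ℝ) × (Fin d → ℝ)) ≃ₜ ((Fin d → ℝ) × (Fin d → ℝ)) :=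
    { toFun := fun p => (p.1 + p.2, p.1)
      invFun := fun p => (p.2, p.1 - p.2)
      left_inv := fun p => by simp
      right_inv := fun p => by simp
      continuous_toFun := (continuous_fst.add continuous_snd).prodMk continuous_fst
      continuous_invFun := continuous_snd.prodMk (continuous_fst.sub continuous_snd) }
  have hint2 : Integrable (Function.uncurry fun y h : Fin d → ℝ => f (y + h) * g y)
      (volume.prod volume) := by
    have hc2 : Continuous fun p : (Fin d → ℝ) × (Fin d → ℝ) => f (p.1 + p.2) * g p.1 :=
      (hfc.comp (continuous_fst.add continuous_snd)).mul (hgc.comp continuous_fst)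
    have hs2 : HasCompactSupport fun p : (Fin d → ℝ) × (Fin d → ℝ) => f (p.1 + p.2) * g p.1 :=
      hfg.comp_homeomorph e₂
    exact hc2.integrable_of_hasCompactSupport hs2
  calc (∫ x : Fin d → ℝ, f x) * (∫ y : Fin d → ℝ, g y)
      = ∫ x : Fin d → ℝ, f x * ∫ y : Fin d → ℝ, g y := (integral_mul_const _ _).symm
    _ = ∫ x : Fin d → ℝ, ∫ y : Fin d → ℝ, f x * g y :=
        integral_congr_ae (Filter.Eventually.of_forall fun x => (integral_const_mul _ _).symm)
    _ = ∫ y : Fin d → ℝ, ∫ x : Fin d → ℝ, f x * g y := integral_integral_swap hint1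
    _ = ∫ y : Fin d → ℝ, ∫ h : Fin d → ℝ, f (y + h) * g y :=
        integral_congr_ae (Filter.Eventually.of_forall fun y =>
          (integral_add_left_eq_self (fun x => f x * g y) y).symm)
    _ = ∫ h : Fin d → ℝ, ∫ y : Fin d → ℝ, f (y + h) * g y := integral_integral_swap hint2

end OscAux

/-- Let `A` be a real symmetric invertible `d×d` matrix.  Then for every
smooth compactly supported `u : ℝ^d → ℂ`, the oscillatory integral
`∫ e^{(iω/2) x·Ax} u(x) dx` tends to `0` as `ω → +∞`. -/
theorem oscillatory_integral_tendsto_zero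
    (d : ℕ) (hd : 1 ≤ d) (A : Matrix (Fin d) (Fin d) ℝ)
    (hsymm : A.IsSymm) (hinv : IsUnit A)
    (u : (Fin d → ℝ) → ℂ) (hu : ContDiff ℝ (⊤ : ℕ∞) u) (hsupp : HasCompactSupport u) :
    Tendsto (fun ω : ℝ =>
        ∫ x : Fin d → ℝ,
          Complex.exp (Complex.I * (ω : ℂ) / 2 *
            ((dotProduct x (A.mulVec x) : ℝ) : ℂ)) * u x)
      atTop (nhds 0) := by
  classical
  haveI : Nonempty (Fin d) := ⟨⟨0, hd⟩⟩
  -- notation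
  set q : (Fin d → ℝ) → ℝ := fun x => dotProduct x (A.mulVec x) with hq
  set b : (Fin d → ℝ) → (Fin d → ℝ) → ℝ := fun x y => dotProduct x (A.mulVec y) with hb
  set F : ℝ → ℂ := fun ω => ∫ x : Fin d → ℝ,
      Complex.exp (Complex.I * (ω : ℂ) / 2 * ((q x : ℝ) : ℂ)) * u x with hF
  show Tendsto F atTop (nhds 0)
  -- basic facts
  have hucont : Continuous u := hu.continuous
  have hAh : ∀ h : Fin d → ℝ, h ≠ 0 → A.mulVec h ≠ 0 := by
    intro h hh hcontra
    apply hh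
    have h2 := congrArg A⁻¹.mulVec hcontra
    rwa [Matrix.mulVec_mulVec, Matrix.nonsing_inv_mul A ((Matrix.isUnit_iff_isUnit_det A).1 hinv),
      Matrix.one_mulVec, Matrix.mulVec_zero] at h2
  have hsymmb : ∀ x y, b x y = b y x := by
    intro x y
    rw [hb]
    simp only
    rw [Matrix.dotProduct_mulVec, ← Matrix.mulVec_transpose, hsymm.eq, dotProduct_comm]
  have hqexp : ∀ h y : Fin d → ℝ, q (y + h) = q y + q h + 2 * b h y := by
    intro h y
    have := hsymmb y h
    simp only [hq, hb, Matrix.mulVec_add, dotProduct_add, add_dotProduct] at this ⊢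
    rw [this]; ring
  have hbcont : Continuous fun p : (Fin d → ℝ) × (Fin d → ℝ) => b p.1 p.2 := by
    simp only [hb, dotProduct, Matrix.mulVec]
    exact continuous_finset_sum _ fun i _ => (continuous_apply i).comp continuous_fst |>.mul
      (continuous_finset_sum _ fun j _ => continuous_const.mul
        ((continuous_apply j).comp continuous_snd))
  have hqcont : Continuous q := by
    have : q = fun x => b x x := rfl
    rw [this]
    exact hbcont.comp (continuous_id.prodMk continuous_id)
  -- the correlation kernel
  set W : (Fin d → ℝ) × (Fin d → ℝ) → ℂ := fun p => u (p.2 + p.1) * (starRingEnd ℂ) (u p.2)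
    with hW
  have hWcont : Continuous W := by
    apply Continuous.mul
    · exact hucont.comp (continuous_snd.add continuous_fst)
    · exact (Complex.continuous_conj).comp (hucont.comp continuous_snd)
  have hP : HasCompactSupport fun p : (Fin d → ℝ) × (Fin d → ℝ) =>
      u p.1 * (starRingEnd ℂ) (u p.2) := by
    apply HasCompactSupport.intro (hsupp.prod hsupp)
    intro p hp
    rw [Set.mem_prod] at hp
    push_neg at hp
    by_cases h1 : p.1 ∈ tsupport u
    · rw [image_eq_zero_of_notMem_tsupport (hp h1), map_zero, mul_zero]
    · rw [image_eq_zero_of_notMem_tsupport h1, zero_mul]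
  have hWsupp : HasCompactSupport W := by
    let e : ((Fin d → ℝ) × (Fin d → ℝ)) ≃ₜ ((Fin d → ℝ) × (Fin d → ℝ)) :=
      { toFun := fun p => (p.2 + p.1, p.2)
        invFun := fun p => (p.1 - p.2, p.2)
        left_inv := fun p => by simp
        right_inv := fun p => by simp
        continuous_toFun := (continuous_snd.add continuous_fst).prodMk continuous_snd
        continuous_invFun := (continuous_fst.sub continuous_snd).prodMk continuous_snd }
    exact hP.comp_homeomorph e
  haveI : NullSingletonClass (volume : Measure (Fin d → ℝ)) := by
    infer_instance
  -- conjugate of F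
  have hconjF : ∀ ω : ℝ, (starRingEnd ℂ) (F ω) =
      ∫ y : Fin d → ℝ, Complex.exp (-(Complex.I * (ω : ℂ) / 2 * ((q y : ℝ) : ℂ))) *
        (starRingEnd ℂ) (u y) := by
    intro ω
    simp only [hF]
    rw [← integral_conj]
    refine integral_congr_ae (Filter.Eventually.of_forall fun y => ?_)
    dsimp only
    rw [map_mul, ← Complex.exp_conj]
    congr 2
    simp only [map_mul, map_div₀, Complex.conj_I, Complex.conj_ofReal, map_ofNat]
    ring
  -- key correlation identity
  have key : ∀ ω : ℝ, F ω * (starRingEnd ℂ) (F ω) =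
      ∫ h : Fin d → ℝ, Complex.exp (Complex.I * (ω : ℂ) / 2 * ((q h : ℝ) : ℂ)) *
        ∫ y : Fin d → ℝ, Complex.exp (Complex.I * (ω : ℂ) * ((b h y : ℝ) : ℂ)) * W (h, y) := by
    intro ω
    have hfc : Continuous fun x => Complex.exp (Complex.I * (ω : ℂ) / 2 * ((q x : ℝ) : ℂ)) * u x :=
      (Complex.continuous_exp.comp
        (continuous_const.mul (Complex.continuous_ofReal.comp hqcont))).mul hucont
    have hfs : HasCompactSupport fun x =>
        Complex.exp (Complex.I * (ω : ℂ) / 2 * ((q x : ℝ) : ℂ)) * u x := hsupp.mul_left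
    have hgc : Continuous fun y =>
        Complex.exp (-(Complex.I * (ω : ℂ) / 2 * ((q y : ℝ) : ℂ))) * (starRingEnd ℂ) (u y) :=
      (Complex.continuous_exp.comp
        (continuous_const.mul (Complex.continuous_ofReal.comp hqcont)).neg).mul
        (Complex.continuous_conj.comp hucont)
    have hgs : HasCompactSupport fun y =>
        Complex.exp (-(Complex.I * (ω : ℂ) / 2 * ((q y : ℝ) : ℂ))) * (starRingEnd ℂ) (u y) :=
      (hsupp.comp_left (g := starRingEnd ℂ) (map_zero _)).mul_left
    rw [hconjF ω]
    simp only [hF]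
    rw [OscAux.prod_integral_shift hfc hfs hgc hgs]
    refine integral_congr_ae (Filter.Eventually.of_forall fun h => ?_)
    dsimp only
    rw [← integral_const_mul]
    refine integral_congr_ae (Filter.Eventually.of_forall fun y => ?_)
    dsimp only
    calc Complex.exp (Complex.I * (ω : ℂ) / 2 * ((q (y + h) : ℝ) : ℂ)) * u (y + h) *
          (Complex.exp (-(Complex.I * (ω : ℂ) / 2 * ((q y : ℝ) : ℂ))) * (starRingEnd ℂ) (u y))
        = Complex.exp (Complex.I * (ω : ℂ) / 2 * ((q (y + h) : ℝ) : ℂ) +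
            -(Complex.I * (ω : ℂ) / 2 * ((q y : ℝ) : ℂ))) * W (h, y) := by
          rw [Complex.exp_add, hW]; ring
      _ = Complex.exp (Complex.I * (ω : ℂ) / 2 * ((q h : ℝ) : ℂ) +
            Complex.I * (ω : ℂ) * ((b h y : ℝ) : ℂ)) * W (h, y) := by
          congr 1
          rw [hqexp h y]
          push_cast
          ring
      _ = Complex.exp (Complex.I * (ω : ℂ) / 2 * ((q h : ℝ) : ℂ)) *
            (Complex.exp (Complex.I * (ω : ℂ) * ((b h y : ℝ) : ℂ)) * W (h, y)) := by
          rw [Complex.exp_add]; ring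
  -- the key tendsto
  have hWint0 : Integrable W (volume.prod volume) :=
    hWcont.integrable_of_hasCompactSupport hWsupp
  have hmain : Tendsto (fun ω : ℝ => F ω * (starRingEnd ℂ) (F ω)) atTop (nhds 0) := by
    simp only [key]
    have h0 : (0 : ℂ) = ∫ h : Fin d → ℝ, (0 : ℂ) := by simp
    rw [h0]
    refine tendsto_integral_filter_of_dominated_convergence
      (bound := fun h => ∫ y : Fin d → ℝ, ‖W (h, y)‖) ?_ ?_ ?_ ?_
    · refine Filter.Eventually.of_forall fun ω => ?_
      have hWint : Integrable
          (fun p : (Fin d → ℝ) × (Fin d → ℝ) =>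
            Complex.exp (Complex.I * (ω : ℂ) * ((b p.1 p.2 : ℝ) : ℂ)) * W p)
          (volume.prod volume) := by
        apply Continuous.integrable_of_hasCompactSupport
        · exact (Complex.continuous_exp.comp
            (continuous_const.mul (Complex.continuous_ofReal.comp hbcont))).mul hWcont
        · exact hWsupp.mul_left
      have h1 := hWint.integral_prod_left
      exact ((Complex.continuous_exp.comp
        (continuous_const.mul (Complex.continuous_ofReal.comp hqcont))).aestronglyMeasurable).mul
        h1.aestronglyMeasurable
    · refine Filter.Eventually.of_forall fun ω => Filter.Eventually.of_forall fun h => ?_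
      rw [norm_mul, OscAux.norm_cexp_of_re_eq_zero _ (OscAux.re_half ω (q h)), one_mul]
      refine (norm_integral_le_integral_norm _).trans (le_of_eq ?_)
      refine integral_congr_ae (Filter.Eventually.of_forall fun y => ?_)
      dsimp only
      rw [norm_mul, OscAux.norm_cexp_of_re_eq_zero _ (OscAux.re_full ω (b h y)), one_mul]
    · exact hWint0.integral_norm_prod_left
    · have hae : ∀ᵐ h : Fin d → ℝ, h ≠ 0 := by
        rw [ae_iff]
        simp only [not_not, Set.setOf_eq_eq_singleton]
        exact measure_singleton 0
      filter_upwards [hae] with h hh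
      set w₀ : EuclideanSpace ℝ (Fin d) :=
        (EuclideanSpace.equiv (Fin d) ℝ).symm (A.mulVec h) with hw₀
      have hw : w₀ ≠ 0 := by
        intro hcon
        apply hAh h hh
        have h2 := congrArg (⇑(EuclideanSpace.equiv (Fin d) ℝ)) hcon
        simpa [hw₀] using h2
      have hinner : ∀ v : EuclideanSpace ℝ (Fin d),
          b h ((MeasurableEquiv.toLp 2 (Fin d → ℝ)).symm v) = ⟪v, w₀⟫ := by
        intro v
        rw [hsymmb]
        simp only [hb, PiLp.inner_apply, RCLike.inner_apply, conj_trivial, dotProduct]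
        exact Finset.sum_congr rfl fun i _ => mul_comm _ _
      have htrans : ∀ ω : ℝ,
          (∫ y : Fin d → ℝ, Complex.exp (Complex.I * (ω : ℂ) * ((b h y : ℝ) : ℂ)) * W (h, y)) =
          ∫ v : EuclideanSpace ℝ (Fin d),
            Complex.exp (Complex.I * (ω : ℂ) * ((⟪v, w₀⟫ : ℝ) : ℂ)) *
              W (h, (MeasurableEquiv.toLp 2 (Fin d → ℝ)).symm v) := by
        intro ω
        rw [← (EuclideanSpace.volume_preserving_symm_measurableEquiv_toLp (Fin d)).integral_comp
          (MeasurableEquiv.measurableEmbedding _)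
          (fun y => Complex.exp (Complex.I * (ω : ℂ) * ((b h y : ℝ) : ℂ)) * W (h, y))]
        refine integral_congr_ae (Filter.Eventually.of_forall fun v => ?_)
        dsimp only
        rw [hinner v]
      have hRL := OscAux.RL d w₀ hw
        (fun v => W (h, (MeasurableEquiv.toLp 2 (Fin d → ℝ)).symm v))
      rw [tendsto_zero_iff_norm_tendsto_zero]
      have hRLn : Tendsto (fun ω : ℝ => ‖∫ v : EuclideanSpace ℝ (Fin d),
          Complex.exp (Complex.I * (ω : ℂ) * ((⟪v, w₀⟫ : ℝ) : ℂ)) *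
            W (h, (MeasurableEquiv.toLp 2 (Fin d → ℝ)).symm v)‖) atTop (nhds 0) := by
        simpa using hRL.norm
      refine hRLn.congr fun ω => ?_
      rw [norm_mul, OscAux.norm_cexp_of_re_eq_zero _ (OscAux.re_half ω (q h)), one_mul,
        htrans ω]
  -- conclude
  have hnormsq : Tendsto (fun ω : ℝ => ‖F ω‖ ^ 2) atTop (nhds 0) := by
    have h2 : Tendsto (fun ω : ℝ => (F ω * (starRingEnd ℂ) (F ω)).re) atTop (nhds 0) := by
      have h4 := (Complex.continuous_re.tendsto 0).comp hmain
      rw [Complex.zero_re] at h4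
      exact h4
    refine h2.congr fun ω => ?_
    rw [Complex.mul_conj, Complex.ofReal_re, ← Complex.sq_norm]
  rw [tendsto_zero_iff_norm_tendsto_zero]
  have h3 := (Real.continuous_sqrt.tendsto 0).comp hnormsq
  rw [Real.sqrt_zero] at h3
  exact h3.congr fun ω => Real.sqrt_sq (norm_nonneg _)
end
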